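/- arXiv:2112.05229 — 7 statements merged into one kernel-verified Lean document; each statement's English description precedes it below -/
import Mathlib

section
/- There exists a subgroup Γ of the unit group (ZMod p)ˣ such that for all v, w ∈ V the following are equivalent: (i) for every g ∈ G, Submodule.span (ZMod p) {g v} = Submodule.span (ZMod p) {g w}; (ii) there exists λ ∈ Γ with v = λ • w. -/
/-!
Write `v ~ w` when `g v` and `g w` span the same line for every `g ∈ G`, and let `Γ` be the
group of units `γ` with `u ~ γ • u` for all `u`. Taking `g = 1`, `v ~ w` forces `v = γ • w` for
some unit `γ`, and then `w ~ γ • w`. The relation `~` is `G`-invariant and the linear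
automorphisms in `G` act transitively on nonzero vectors, so `w ~ γ • w` for a single nonzero `w`
already gives `γ ∈ Γ`.
-/

open Submodule

theorem LinearEquiv.exists_apply_eq_of_ne_zero {K V : Type*} [Field K] [AddCommGroup V]
    [Module K V] {v w : V} (hv : v ≠ 0) (hw : w ≠ 0) : ∃ φ : V ≃ₗ[K] V, φ v = w := by
  let f := (toSpanNonzeroSingleton K V v hv).symm ≪≫ₗ toSpanNonzeroSingleton K V w hw
  obtain ⟨φ, hφ⟩ := Submodule.exists_linearEquiv_restrict_eq f
  have h := hφ (toSpanNonzeroSingleton K V v hv 1)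
  rw [LinearEquiv.trans_apply, LinearEquiv.symm_apply_apply, toSpanNonzeroSingleton_one,
    toSpanNonzeroSingleton_one] at h
  exact ⟨φ, h.symm⟩

section LinesAgree

variable (K : Type*) {V : Type*} [Field K] [AddCommGroup V] [Module K V]
  (G : Subgroup (Equiv.Perm V))

def LinesAgree (v w : V) : Prop := ∀ g ∈ G, K ∙ g v = K ∙ g w

variable {K G}

theorem LinesAgree.refl (v : V) : LinesAgree K G v v := fun _ _ ↦ rfl

theorem LinesAgree.symm {v w : V} (h : LinesAgree K G v w) : LinesAgree K G w v :=
  fun g hg ↦ (h g hg).symm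

theorem LinesAgree.trans {u v w : V} (h₁ : LinesAgree K G u v) (h₂ : LinesAgree K G v w) :
    LinesAgree K G u w :=
  fun g hg ↦ (h₁ g hg).trans (h₂ g hg)

theorem LinesAgree.map {v w : V} (h : LinesAgree K G v w) {f : Equiv.Perm V} (hf : f ∈ G) :
    LinesAgree K G (f v) (f w) :=
  fun g hg ↦ h (g * f) (G.mul_mem hg hf)

theorem LinesAgree.span_eq {v w : V} (h : LinesAgree K G v w) : K ∙ v = K ∙ w :=
  h 1 G.one_mem

variable (K G)

def lineScalars : Subgroup Kˣ where
  carrier := {γ | ∀ v : V, LinesAgree K G v (γ • v)}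
  one_mem' v := by simpa using LinesAgree.refl v
  mul_mem' {a b} ha hb v := by simpa [mul_smul] using (hb v).trans (ha (b • v))
  inv_mem' {a} ha v := by simpa using (ha (a⁻¹ • v)).symm

variable {K G}

theorem mem_lineScalars_of_linesAgree_smul
    (hAut : ∀ φ : V ≃ₗ[K] V, (φ.toEquiv : Equiv.Perm V) ∈ G) {w : V} (hw : w ≠ 0) {γ : Kˣ}
    (h : LinesAgree K G w (γ • w)) : γ ∈ lineScalars K G := by
  intro u
  rcases eq_or_ne u 0 with rfl | hu
  · simpa using LinesAgree.refl (0 : V)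
  obtain ⟨φ, rfl⟩ := LinearEquiv.exists_apply_eq_of_ne_zero (K := K) hw hu
  simpa [Units.smul_def] using h.map (hAut φ)

theorem linesAgree_iff_exists_mem_lineScalars
    (hAut : ∀ φ : V ≃ₗ[K] V, (φ.toEquiv : Equiv.Perm V) ∈ G) {v w : V} :
    LinesAgree K G v w ↔ ∃ γ ∈ lineScalars K G, v = (γ : K) • w := by
  refine ⟨fun h ↦ ?_, fun ⟨γ, hγ, hv⟩ ↦ hv ▸ (hγ w).symm⟩
  obtain ⟨γ, rfl⟩ := span_singleton_eq_span_singleton.mp h.span_eq.symm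
  rcases eq_or_ne w 0 with rfl | hw
  · exact ⟨1, one_mem _, by simp⟩
  exact ⟨γ, mem_lineScalars_of_linesAgree_smul hAut hw h.symm, rfl⟩

end LinesAgree

theorem stmt_1_general (p : ℕ) [Fact p.Prime]
    (V : Type*) [AddCommGroup V] [Module (ZMod p) V]
    (G : Subgroup (Equiv.Perm V))
    (hAut : ∀ φ : V ≃ₗ[ZMod p] V, (φ.toEquiv : Equiv.Perm V) ∈ G) :
    ∃ Γ : Subgroup (ZMod p)ˣ, ∀ v w : V,
      (∀ g ∈ G, Submodule.span (ZMod p) {g v} = Submodule.span (ZMod p) {g w}) ↔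
      (∃ γ ∈ Γ, v = (γ : ZMod p) • w) :=
  ⟨lineScalars (ZMod p) G, fun _ _ ↦ linesAgree_iff_exists_mem_lineScalars hAut⟩

/-- There exists a subgroup `Γ` of `(ZMod p)ˣ` such that for all `v w : V`,
`span {g v} = span {g w}` for all `g ∈ G` iff `v = γ • w` for some `γ ∈ Γ`. -/
theorem stmt_1 (p : ℕ) [Fact p.Prime] (hp : p ≠ 2)
    (V : Type*) [AddCommGroup V] [Module (ZMod p) V] [Countable V] [Infinite V]
    (G : Subgroup (Equiv.Perm V))
    (hclosed : ∀ f : Equiv.Perm V, (∀ F : Finset V, ∃ g ∈ G, ∀ x ∈ F, g x = f x) → f ∈ G)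
    (hAut : ∀ φ : V ≃ₗ[ZMod p] V, (φ.toEquiv : Equiv.Perm V) ∈ G)
    (hzero : ∀ g ∈ G, g 0 = (0 : V)) :
    ∃ Γ : Subgroup (ZMod p)ˣ, ∀ v w : V,
      (∀ g ∈ G, Submodule.span (ZMod p) {g v} = Submodule.span (ZMod p) {g w}) ↔
      (∃ γ ∈ Γ, v = (γ : ZMod p) • w) :=
  stmt_1_general p V G hAut
end

section
/- Let g be a bijection of the set of one-dimensional subspaces of V (submodules L with finrank (ZMod p) L = 1) onto itself such that for all one-dimensional subspaces L₀, L₁, L₂ of V: L₀ ≤ L₁ ⊔ L₂ if and only if g L₀ ≤ g L₁ ⊔ g L₂. Then there exists a linear automorphism φ : V ≃ₗ[ZMod p] V such that g L = Submodule.map φ L for every one-dimensional subspace L of V. -/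
/-!
Fix `a ≠ 0` and a vector `a'` spanning the image point of `a`. For `x` off the line `K ∙ a`,
choose the vector `w` spanning the image of `x` so that `a' + w` spans the image of `a + x`; this
normalization kills the scalar ambiguity. When `a, x, y` are independent, the points `x + y` and
`a + x + y` are intersections of lines through `x, y, a + x, a + y`, so comparing coefficients in
the independent triple `a', w_x, w_y` shows that the normalized vector of `x + y` is `w_x + w_y`.
In infinite dimension a vector in general position is always available, which extends this
partial additivity to an additive map `f` on all of `V` with `f x` spanning the image of `x` for
every `x ≠ 0`. Over `ZMod p` an additive map is linear, and bijectivity of the collineation on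
points makes `f` bijective.
-/

open Submodule Module

section LinearAlgebra

section Semiring

variable {R M : Type*} [Semiring R] [AddCommMonoid M] [Module R M]

lemma exists_notMem_span_of_finite (hM : ¬ Module.Finite R M) {s : Set M} (hs : s.Finite) :
    ∃ z, z ∉ span R s := by
  by_contra! h
  exact hM ⟨eq_top_iff'.2 h ▸ fg_span hs⟩

lemma ne_zero_of_notMem {W : Submodule R M} {x : M} (hx : x ∉ W) : x ≠ 0 :=
  fun h => hx (h ▸ W.zero_mem)

end Semiring

variable {K V : Type*} [DivisionRing K] [AddCommGroup V] [Module K V]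

lemma add_ne_zero_of_mem_of_notMem {W : Submodule K V} {u y : V} (hu : u ∈ W) (hy : y ∉ W) :
    u + y ≠ 0 :=
  fun h => hy ((W.add_mem_iff_right hu).1 (h ▸ W.zero_mem))

lemma exists_ne_zero_and_eq_span_singleton {L : Submodule K V} (h : finrank K L = 1) :
    ∃ w, w ≠ 0 ∧ L = K ∙ w :=
  ⟨(Projectivization.mk'' L h).rep, Projectivization.rep_nonzero _, by
    rw [← Projectivization.submodule_eq, Projectivization.submodule_mk'']⟩

lemma mem_span_singleton_of_mem_span_singleton {x y : V} (hx : x ≠ 0) (h : x ∈ K ∙ y) :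
    y ∈ K ∙ x := by
  simpa using mem_span_insert_exchange (s := ∅) (by simpa using h) (by simpa using hx)

lemma mem_span_singleton_of_mem_span_pair {a u v w : V} (hw : w ∉ span K {a, v})
    (hv : u ∈ span K {a, v}) (hw' : u ∈ span K {a, w}) : u ∈ K ∙ a := by
  by_contra hu
  rw [Set.pair_comm] at hw'
  refine hw (span_le.2 ?_ (mem_span_insert_exchange hw' hu))
  exact Set.insert_subset_iff.2 ⟨hv, Set.singleton_subset_iff.2 (subset_span (by simp))⟩

lemma span_singleton_eq_of_mem {x y : V} (hx : x ≠ 0) (h : x ∈ K ∙ y) : K ∙ x = K ∙ y :=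
  le_antisymm ((span_singleton_le_iff_mem _ _).2 h)
    ((span_singleton_le_iff_mem _ _).2 (mem_span_singleton_of_mem_span_singleton hx h))

lemma linearIndependent_of_notMem_span {a v w : V} (ha : a ≠ 0) (hv : v ∉ K ∙ a)
    (hw : w ∉ span K {a, v}) : LinearIndependent K ![w, v, a] := by
  rw [linearIndependent_finSucc, linearIndependent_finSucc]
  simp [Matrix.range_cons, ha, hv, hw]

lemma eq_add_of_mem_span_pair {a v w t : V} (ha : a ≠ 0) (hv : v ∉ K ∙ a)
    (hw : w ∉ span K {a, v}) (h₁ : t ∈ span K {v, w}) (h₂ : a + t ∈ span K {a + v, w})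
    (h₃ : a + t ∈ span K {a + w, v}) : t = v + w := by
  have hli := Fintype.linearIndependent_iff.1 (linearIndependent_of_notMem_span ha hv hw)
  obtain ⟨c, d, rfl⟩ := mem_span_pair.1 h₁
  obtain ⟨r, s, h₂⟩ := mem_span_pair.1 h₂
  obtain ⟨r', s', h₃⟩ := mem_span_pair.1 h₃
  have e₂ := hli ![d - s, c - r, 1 - r] (by
    rw [← sub_eq_zero.2 h₂.symm]
    simp only [Fin.sum_univ_three, Matrix.cons_val, sub_smul, one_smul, smul_add]
    abel)
  have e₃ := hli ![d - r', c - s', 1 - r'] (by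
    rw [← sub_eq_zero.2 h₃.symm]
    simp only [Fin.sum_univ_three, Matrix.cons_val, sub_smul, one_smul, smul_add]
    abel)
  have hc : c = 1 := (sub_eq_zero.1 (e₂ 1)).trans (sub_eq_zero.1 (e₂ 2)).symm
  have hd : d = 1 := (sub_eq_zero.1 (e₃ 0)).trans (sub_eq_zero.1 (e₃ 2)).symm
  simp [hc, hd]

end LinearAlgebra

/-- `S x` is the image of the point `K ∙ x` (for `x ≠ 0`) under a collineation of the projective
space of `V`: a bijection of points preserving collinearity in both directions. -/
structure IsCollineation {K V : Type*} [DivisionRing K] [AddCommGroup V] [Module K V]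
    (S : V → Submodule K V) : Prop where
  finrank_eq_one : ∀ x : V, x ≠ 0 → finrank K (S x) = 1
  span_singleton_le_sup_iff : ∀ x y z : V, x ≠ 0 → y ≠ 0 → z ≠ 0 →
    (K ∙ x ≤ K ∙ y ⊔ K ∙ z ↔ S x ≤ S y ⊔ S z)
  exists_eq : ∀ L : Submodule K V, finrank K L = 1 → ∃ x, x ≠ 0 ∧ S x = L

namespace IsCollineation

variable {K V : Type*} [DivisionRing K] [AddCommGroup V] [Module K V] {S : V → Submodule K V}
  {a a' x y z v w t x' y' z' : V}

lemma exists_eq_span_singleton (hS : IsCollineation S) (hx : x ≠ 0) :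
    ∃ w, w ≠ 0 ∧ S x = K ∙ w :=
  exists_ne_zero_and_eq_span_singleton (hS.finrank_eq_one x hx)

lemma ne_zero_of_eq_span_singleton (hS : IsCollineation S) (hx : x ≠ 0) (hx' : S x = K ∙ x') :
    x' ≠ 0 := by
  rintro rfl
  have h := hS.finrank_eq_one x hx
  rw [hx', span_zero_singleton, finrank_bot] at h
  exact zero_ne_one h

lemma mem_span_pair_iff (hS : IsCollineation S) (hx : x ≠ 0) (hy : y ≠ 0) (hz : z ≠ 0)
    (hx' : S x = K ∙ x') (hy' : S y = K ∙ y') (hz' : S z = K ∙ z') :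
    x ∈ span K {y, z} ↔ x' ∈ span K {y', z'} := by
  rw [← span_singleton_le_iff_mem, ← span_singleton_le_iff_mem, span_insert, span_insert,
    hS.span_singleton_le_sup_iff x y z hx hy hz, hx', hy', hz']

lemma mem_span_singleton_iff (hS : IsCollineation S) (hx : x ≠ 0) (hy : y ≠ 0)
    (hx' : S x = K ∙ x') (hy' : S y = K ∙ y') : x ∈ K ∙ y ↔ x' ∈ K ∙ y' := by
  simpa only [Set.pair_eq_singleton] using hS.mem_span_pair_iff hx hy hy hx' hy' hy'

lemma eq_of_span_singleton_eq (hS : IsCollineation S) (hx : x ≠ 0) (hy : y ≠ 0)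
    (h : K ∙ x = K ∙ y) : S x = S y := by
  obtain ⟨x', hx'₀, hx'⟩ := hS.exists_eq_span_singleton hx
  obtain ⟨y', -, hy'⟩ := hS.exists_eq_span_singleton hy
  rw [hx', hy']
  exact span_singleton_eq_of_mem hx'₀
    ((hS.mem_span_singleton_iff hx hy hx' hy').1 (h ▸ mem_span_singleton_self x))

/-- For `x ∉ K ∙ a`, normalizing against `S a = K ∙ a'` removes the scalar ambiguity in a vector
spanning `S x`. -/
def IsFrameRep (S : V → Submodule K V) (a a' x w : V) : Prop :=
  S x = K ∙ w ∧ S (a + x) = K ∙ (a' + w)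

lemma exists_isFrameRep (hS : IsCollineation S) (ha : a ≠ 0) (ha' : S a = K ∙ a')
    (hx : x ∉ K ∙ a) : ∃ w, IsFrameRep S a a' x w := by
  have hx₀ : x ≠ 0 := ne_zero_of_notMem hx
  have hax : a + x ∉ K ∙ a :=
    fun h => hx (((K ∙ a).add_mem_iff_right (mem_span_singleton_self a)).1 h)
  have hax₀ : a + x ≠ 0 := ne_zero_of_notMem hax
  obtain ⟨x', -, hx'⟩ := hS.exists_eq_span_singleton hx₀
  obtain ⟨t, -, ht⟩ := hS.exists_eq_span_singleton hax₀
  obtain ⟨α, β, hαβ⟩ := mem_span_pair.1 ((hS.mem_span_pair_iff hax₀ ha hx₀ ht ha' hx').1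
    (add_mem (subset_span (by simp)) (subset_span (by simp))))
  have hα : α ≠ 0 := by
    rintro rfl
    have h : a + x ∈ K ∙ x := (hS.mem_span_singleton_iff hax₀ hx₀ ht hx').2 (by
      rw [← hαβ, zero_smul, zero_add]; exact smul_mem _ _ (mem_span_singleton_self x'))
    refine hx (mem_span_singleton_of_mem_span_singleton ha ?_)
    simpa using sub_mem h (mem_span_singleton_self x)
  have hβ : β ≠ 0 := by
    rintro rfl
    refine hax ((hS.mem_span_singleton_iff hax₀ ha ht ha').2 ?_)
    rw [← hαβ, zero_smul, add_zero]
    exact smul_mem _ _ (mem_span_singleton_self a')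
  refine ⟨(α⁻¹ * β) • x', ?_, ?_⟩
  · rw [hx', span_singleton_smul_eq (by simp [hα, hβ])]
  · rw [ht, ← span_singleton_smul_eq (isUnit_iff_ne_zero.2 (inv_ne_zero hα)), ← hαβ,
      smul_add, smul_smul, smul_smul, inv_mul_cancel₀ hα, one_smul]

lemma eq_add_of_isFrameRep (hS : IsCollineation S) (ha : a ≠ 0) (ha' : S a = K ∙ a')
    (hx : x ∉ K ∙ a) (hy : y ∉ span K {a, x}) (hv : IsFrameRep S a a' x v)
    (hw : IsFrameRep S a a' y w) (ht : IsFrameRep S a a' (x + y) t) : t = v + w := by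
  have ha_mem : a ∈ span K {a, x} := subset_span (by simp)
  have hx_mem : x ∈ span K {a, x} := subset_span (by simp)
  have hx₀ : x ≠ 0 := ne_zero_of_notMem hx
  have hy₀ : y ≠ 0 := ne_zero_of_notMem hy
  have hxy₀ : x + y ≠ 0 := add_ne_zero_of_mem_of_notMem hx_mem hy
  have hax₀ : a + x ≠ 0 := add_ne_zero_of_mem_of_notMem (mem_span_singleton_self a) hx
  have hay₀ : a + y ≠ 0 := add_ne_zero_of_mem_of_notMem ha_mem hy
  have haxy₀ : a + (x + y) ≠ 0 :=
    add_assoc a x y ▸ add_ne_zero_of_mem_of_notMem (add_mem ha_mem hx_mem) hy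
  refine eq_add_of_mem_span_pair (hS.ne_zero_of_eq_span_singleton ha ha')
    (fun h => hx ((hS.mem_span_singleton_iff hx₀ ha hv.1 ha').2 h))
    (fun h => hy ((hS.mem_span_pair_iff hy₀ ha hx₀ hw.1 ha' hv.1).2 h))
    ((hS.mem_span_pair_iff hxy₀ hx₀ hy₀ ht.1 hv.1 hw.1).1
      (add_mem (subset_span (by simp)) (subset_span (by simp))))
    ((hS.mem_span_pair_iff haxy₀ hax₀ hy₀ ht.2 hv.2 hw.1).1 ?_)
    ((hS.mem_span_pair_iff haxy₀ hay₀ hx₀ ht.2 hw.2 hv.1).1 ?_)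
  · rw [← add_assoc]
    exact add_mem (subset_span (by simp)) (subset_span (by simp))
  · rw [← add_assoc, add_right_comm]
    exact add_mem (subset_span (by simp)) (subset_span (by simp))

/-- A junk value unless `x ∉ K ∙ a`. -/
noncomputable def frameRep (S : V → Submodule K V) (a a' x : V) : V :=
  Classical.epsilon (IsFrameRep S a a' x)

lemma isFrameRep_frameRep (hS : IsCollineation S) (ha : a ≠ 0) (ha' : S a = K ∙ a')
    (hx : x ∉ K ∙ a) : IsFrameRep S a a' x (frameRep S a a' x) :=
  Classical.epsilon_spec (hS.exists_isFrameRep ha ha' hx)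

lemma frameRep_add (hS : IsCollineation S) (ha : a ≠ 0) (ha' : S a = K ∙ a')
    (hx : x ∉ K ∙ a) (hy : y ∉ span K {a, x}) :
    frameRep S a a' (x + y) = frameRep S a a' x + frameRep S a a' y := by
  have hle : K ∙ a ≤ span K {a, x} := span_mono (by simp)
  have hxy : x + y ∉ K ∙ a := fun h =>
    hy ((Submodule.add_mem_iff_right _ (subset_span (by simp))).1 (hle h))
  exact hS.eq_add_of_isFrameRep ha ha' hx hy (hS.isFrameRep_frameRep ha ha' hx)
    (hS.isFrameRep_frameRep ha ha' fun h => hy (hle h)) (hS.isFrameRep_frameRep ha ha' hxy)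

lemma frameRep_add_sub_eq_of_notMem (hS : IsCollineation S) (ha : a ≠ 0)
    (ha' : S a = K ∙ a') (hz : z ∉ span K {a, x}) (hz' : z' ∉ span K {a, x, z}) :
    frameRep S a a' (x + z) - frameRep S a a' z =
      frameRep S a a' (x + z') - frameRep S a a' z' := by
  have hx_mem : x ∈ span K {a, x, z} := subset_span (by simp)
  have hax_le : span K {a, x} ≤ span K {a, x, z} := span_mono (by simp [Set.insert_subset_iff])
  have hxz : x + z ∉ K ∙ a := fun h =>
    hz ((Submodule.add_mem_iff_right _ (subset_span (by simp))).1 (span_mono (by simp) h))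
  have hz'xz : z' ∉ span K {a, x + z} := fun h => hz' (span_le.2 (Set.insert_subset_iff.2
    ⟨subset_span (by simp), Set.singleton_subset_iff.2 (add_mem hx_mem (subset_span (by simp)))⟩) h)
  have hxz' : x + z' ∉ K ∙ a := fun h => hz' (hax_le
    ((Submodule.add_mem_iff_right _ (subset_span (by simp))).1 (span_mono (by simp) h)))
  have hzxz' : z ∉ span K {a, x + z'} := by
    intro h
    rw [Set.pair_comm] at h
    have h' := mem_span_insert_exchange h fun h => hz (span_mono (by simp) h)
    refine hz' ((Submodule.add_mem_iff_right _ hx_mem).1 (span_mono ?_ h'))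
    simp [Set.subset_def]
  have h₁ := hS.frameRep_add ha ha' hxz hz'xz
  have h₂ := hS.frameRep_add ha ha' hxz' hzxz'
  rw [add_right_comm] at h₂
  rw [sub_eq_sub_iff_add_eq_add, ← h₁, h₂]

lemma frameRep_add_sub_eq (hS : IsCollineation S) (ha : a ≠ 0) (ha' : S a = K ∙ a')
    (hV : ¬ FiniteDimensional K V) (hz : z ∉ span K {a, x}) (hz' : z' ∉ span K {a, x}) :
    frameRep S a a' (x + z) - frameRep S a a' z =
      frameRep S a a' (x + z') - frameRep S a a' z' := by
  obtain ⟨u, hu⟩ := exists_notMem_span_of_finite hV (Set.toFinite {a, x, z, z'})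
  rw [hS.frameRep_add_sub_eq_of_notMem ha ha' hz (fun h => hu (span_mono (by
      simp [Set.subset_def]) h)),
    hS.frameRep_add_sub_eq_of_notMem ha ha' hz' (fun h => hu (span_mono (by
      simp [Set.subset_def]) h))]

/-- Independent of the choice of `z ∉ span K {a, x}` (`frameMap_eq`); this is how `frameRep`
extends additively across the line `K ∙ a`. -/
noncomputable def frameMap (S : V → Submodule K V) (a a' x : V) : V :=
  frameRep S a a' (x + Classical.epsilon fun z => z ∉ span K {a, x}) -
    frameRep S a a' (Classical.epsilon fun z => z ∉ span K {a, x})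

lemma frameMap_eq (hS : IsCollineation S) (ha : a ≠ 0) (ha' : S a = K ∙ a')
    (hV : ¬ FiniteDimensional K V) (hz : z ∉ span K {a, x}) :
    frameMap S a a' x = frameRep S a a' (x + z) - frameRep S a a' z :=
  hS.frameRep_add_sub_eq ha ha' hV
    (Classical.epsilon_spec (exists_notMem_span_of_finite hV (Set.toFinite _))) hz

lemma frameMap_add (hS : IsCollineation S) (ha : a ≠ 0) (ha' : S a = K ∙ a')
    (hV : ¬ FiniteDimensional K V) (x y : V) :
    frameMap S a a' (x + y) = frameMap S a a' x + frameMap S a a' y := by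
  obtain ⟨z, hz⟩ := exists_notMem_span_of_finite hV (Set.toFinite {a, x, y})
  have hyz : y + z ∉ span K {a, x} := fun h => hz ((Submodule.add_mem_iff_right _
    (subset_span (by simp))).1 (span_mono (by simp [Set.subset_def]) h))
  rw [hS.frameMap_eq ha ha' hV (x := x + y) (z := z) fun h => hz (span_le.2
      (Set.insert_subset_iff.2 ⟨subset_span (by simp), Set.singleton_subset_iff.2
        (add_mem (subset_span (by simp)) (subset_span (by simp)))⟩) h),
    hS.frameMap_eq ha ha' hV hyz,
    hS.frameMap_eq ha ha' hV (x := y) (z := z) fun h => hz (span_mono (by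
      simp [Set.subset_def]) h), add_assoc]
  abel

lemma frameMap_eq_frameRep (hS : IsCollineation S) (ha : a ≠ 0) (ha' : S a = K ∙ a')
    (hV : ¬ FiniteDimensional K V) (hx : x ∉ K ∙ a) : frameMap S a a' x = frameRep S a a' x := by
  obtain ⟨z, hz⟩ := exists_notMem_span_of_finite hV (Set.toFinite {a, x})
  rw [hS.frameMap_eq ha ha' hV hz, hS.frameRep_add ha ha' hx hz, add_sub_cancel_right]

lemma span_frameMap_of_notMem (hS : IsCollineation S) (ha : a ≠ 0) (ha' : S a = K ∙ a')
    (hV : ¬ FiniteDimensional K V) (hx : x ∉ K ∙ a) : S x = K ∙ frameMap S a a' x := by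
  rw [hS.frameMap_eq_frameRep ha ha' hV hx]
  exact (hS.isFrameRep_frameRep ha ha' hx).1

lemma frameMap_mem_span_pair (hS : IsCollineation S) (ha : a ≠ 0) (ha' : S a = K ∙ a')
    (hV : ¬ FiniteDimensional K V) (hx : x ∈ K ∙ a) (hz : z ∉ K ∙ a) :
    frameMap S a a' x ∈ span K {a', frameMap S a a' z} := by
  have hxz : x + z ∉ K ∙ a := fun h => hz ((Submodule.add_mem_iff_right _ hx).1 h)
  have h := (hS.mem_span_pair_iff (ne_zero_of_notMem hxz) ha (ne_zero_of_notMem hz)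
    (hS.span_frameMap_of_notMem ha ha' hV hxz) ha' (hS.span_frameMap_of_notMem ha ha' hV hz)).1
    (add_mem (span_mono (by simp) hx) (subset_span (by simp)))
  rw [hS.frameMap_add ha ha' hV] at h
  simpa using sub_mem h (subset_span (by simp) : frameMap S a a' z ∈ span K {a', _})

lemma span_frameMap_of_mem (hS : IsCollineation S) (ha : a ≠ 0) (ha' : S a = K ∙ a')
    (hV : ¬ FiniteDimensional K V) (hx : x ∈ K ∙ a) (hx₀ : x ≠ 0) :
    S x = K ∙ frameMap S a a' x := by
  have hSz {z : V} (hz : z ∉ K ∙ a) := hS.span_frameMap_of_notMem ha ha' hV hz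
  obtain ⟨z₁, hz₁⟩ := exists_notMem_span_of_finite hV (Set.toFinite {a})
  obtain ⟨z₂, hz₂⟩ := exists_notMem_span_of_finite hV (Set.toFinite {a, z₁})
  have hz₂' : z₂ ∉ K ∙ a := fun h => hz₂ (span_mono (by simp) h)
  -- `frameMap x` lies on the two lines joining `a'` to `frameMap z₁` and to `frameMap z₂`
  have hFx : frameMap S a a' x ∈ K ∙ a' := mem_span_singleton_of_mem_span_pair
    (fun h => hz₂ ((hS.mem_span_pair_iff (ne_zero_of_notMem hz₂') ha (ne_zero_of_notMem hz₁)
      (hSz hz₂') ha' (hSz hz₁)).2 h))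
    (hS.frameMap_mem_span_pair ha ha' hV hx hz₁) (hS.frameMap_mem_span_pair ha ha' hV hx hz₂')
  have hFx₀ : frameMap S a a' x ≠ 0 := by
    intro h
    have hxz : x + z₁ ∉ K ∙ a := fun h => hz₁ ((Submodule.add_mem_iff_right _ hx).1 h)
    have hxz_mem : x + z₁ ∈ K ∙ z₁ := (hS.mem_span_singleton_iff (ne_zero_of_notMem hxz)
      (ne_zero_of_notMem hz₁) (hSz hxz) (hSz hz₁)).2 (by
        rw [hS.frameMap_add ha ha' hV, h, zero_add]; exact mem_span_singleton_self _)
    have hx_mem : x ∈ K ∙ z₁ := by simpa using sub_mem hxz_mem (mem_span_singleton_self z₁)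
    exact hz₁ (mem_span_singleton_trans (mem_span_singleton_of_mem_span_singleton hx₀ hx_mem) hx)
  rw [hS.eq_of_span_singleton_eq hx₀ ha (span_singleton_eq_of_mem hx₀ hx), ha',
    span_singleton_eq_of_mem hFx₀ hFx]

lemma span_frameMap (hS : IsCollineation S) (ha : a ≠ 0) (ha' : S a = K ∙ a')
    (hV : ¬ FiniteDimensional K V) (hx : x ≠ 0) : S x = K ∙ frameMap S a a' x := by
  by_cases hxa : x ∈ K ∙ a
  · exact hS.span_frameMap_of_mem ha ha' hV hxa hx
  · exact hS.span_frameMap_of_notMem ha ha' hV hxa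

lemma bijective_of_span_eq (hS : IsCollineation S) {ℓ : V →ₗ[K] V}
    (hℓ : ∀ x, x ≠ 0 → S x = K ∙ ℓ x) : Function.Bijective ℓ := by
  refine ⟨(injective_iff_map_eq_zero ℓ).2 fun x hx => ?_, fun w => ?_⟩
  · by_contra hx₀
    exact hS.ne_zero_of_eq_span_singleton hx₀ (hℓ x hx₀) hx
  · rcases eq_or_ne w 0 with rfl | hw
    · exact ⟨0, map_zero ℓ⟩
    obtain ⟨x, hx₀, hx⟩ := hS.exists_eq (K ∙ w) (finrank_span_singleton hw)
    obtain ⟨c, hc⟩ := mem_span_singleton.1 (hℓ x hx₀ ▸ hx ▸ mem_span_singleton_self w)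
    exact ⟨c • x, by rw [map_smul, hc]⟩

end IsCollineation

theorem IsCollineation.exists_linearEquiv_of_zmod {p : ℕ} [Fact p.Prime] {V : Type*}
    [AddCommGroup V] [Module (ZMod p) V] {S : V → Submodule (ZMod p) V} (hS : IsCollineation S)
    (hV : ¬ FiniteDimensional (ZMod p) V) :
    ∃ φ : V ≃ₗ[ZMod p] V, ∀ x, x ≠ 0 → S x = ZMod p ∙ φ x := by
  obtain ⟨a, ha⟩ : ∃ a : V, a ≠ 0 := by
    simpa using exists_notMem_span_of_finite hV Set.finite_empty
  obtain ⟨a', -, ha'⟩ := hS.exists_eq_span_singleton ha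
  let ℓ := (AddMonoidHom.mk' (frameMap S a a') (hS.frameMap_add ha ha' hV)).toZModLinearMap p
  have hℓ : ∀ x, x ≠ 0 → S x = ZMod p ∙ ℓ x := fun x hx => hS.span_frameMap ha ha' hV hx
  exact ⟨.ofBijective ℓ (hS.bijective_of_span_eq hℓ), hℓ⟩

section Lines

variable {K V : Type*} [DivisionRing K] [AddCommGroup V] [Module K V]

open Classical in
noncomputable def lineImage
    (g : {L : Submodule K V // finrank K L = 1} → {L : Submodule K V // finrank K L = 1})
    (x : V) : Submodule K V :=
  if hx : x = 0 then ⊥ else g ⟨K ∙ x, finrank_span_singleton hx⟩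

lemma lineImage_of_ne_zero
    {g : {L : Submodule K V // finrank K L = 1} → {L : Submodule K V // finrank K L = 1}}
    {x : V} (hx : x ≠ 0) : lineImage g x = g ⟨K ∙ x, finrank_span_singleton hx⟩ := by
  rw [lineImage, dif_neg hx]

lemma isCollineation_lineImage
    (g : {L : Submodule K V // finrank K L = 1} ≃ {L : Submodule K V // finrank K L = 1})
    (hg : ∀ L₀ L₁ L₂ : {L : Submodule K V // finrank K L = 1},
      (L₀ : Submodule K V) ≤ (L₁ : Submodule K V) ⊔ (L₂ : Submodule K V) ↔
        (g L₀ : Submodule K V) ≤ (g L₁ : Submodule K V) ⊔ (g L₂ : Submodule K V)) :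
    IsCollineation (lineImage g) where
  finrank_eq_one x hx := by
    rw [lineImage_of_ne_zero hx]
    exact (g _).2
  span_singleton_le_sup_iff x y z hx hy hz := by
    rw [lineImage_of_ne_zero hx, lineImage_of_ne_zero hy, lineImage_of_ne_zero hz]
    exact hg ⟨_, finrank_span_singleton hx⟩ ⟨_, finrank_span_singleton hy⟩
      ⟨_, finrank_span_singleton hz⟩
  exists_eq L hL := by
    obtain ⟨x, hx, hgx⟩ := exists_ne_zero_and_eq_span_singleton (g.symm ⟨L, hL⟩).2
    have hxL : g.symm ⟨L, hL⟩ = ⟨K ∙ x, finrank_span_singleton hx⟩ := Subtype.ext hgx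
    refine ⟨x, hx, ?_⟩
    rw [lineImage_of_ne_zero hx, ← hxL, g.apply_symm_apply]

end Lines

theorem stmt_2_general (p : ℕ) [Fact p.Prime]
    (V : Type*) [AddCommGroup V] [Module (ZMod p) V] [Infinite V]
    (g : {L : Submodule (ZMod p) V // Module.finrank (ZMod p) L = 1} ≃
         {L : Submodule (ZMod p) V // Module.finrank (ZMod p) L = 1})
    (hg : ∀ L₀ L₁ L₂ : {L : Submodule (ZMod p) V // Module.finrank (ZMod p) L = 1},
      (L₀ : Submodule (ZMod p) V) ≤ (L₁ : Submodule (ZMod p) V) ⊔ (L₂ : Submodule (ZMod p) V) ↔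
      (g L₀ : Submodule (ZMod p) V) ≤ (g L₁ : Submodule (ZMod p) V) ⊔ (g L₂ : Submodule (ZMod p) V)) :
    ∃ φ : V ≃ₗ[ZMod p] V,
      ∀ L : {L : Submodule (ZMod p) V // Module.finrank (ZMod p) L = 1},
        (g L : Submodule (ZMod p) V) =
          Submodule.map (φ : V →ₗ[ZMod p] V) (L : Submodule (ZMod p) V) := by
  have hV : ¬ FiniteDimensional (ZMod p) V := fun _ =>
    not_finite_iff_infinite.2 ‹_› (Module.finite_of_finite (ZMod p))
  obtain ⟨φ, hφ⟩ := (isCollineation_lineImage g hg).exists_linearEquiv_of_zmod hV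
  refine ⟨φ, fun L => ?_⟩
  obtain ⟨x, hx, hL⟩ := exists_ne_zero_and_eq_span_singleton L.2
  obtain rfl : L = ⟨ZMod p ∙ x, finrank_span_singleton hx⟩ := Subtype.ext hL
  rw [← lineImage_of_ne_zero hx, hφ x hx, map_span, Set.image_singleton]
  rfl

/-- Fundamental theorem of projective geometry: a bijection of the set of
one-dimensional subspaces of `V` preserving projective lines is induced by a
linear automorphism of `V`. -/
theorem stmt_2 (p : ℕ) [Fact p.Prime] (hp : p ≠ 2)
    (V : Type*) [AddCommGroup V] [Module (ZMod p) V] [Countable V] [Infinite V]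
    (g : {L : Submodule (ZMod p) V // Module.finrank (ZMod p) L = 1} ≃
         {L : Submodule (ZMod p) V // Module.finrank (ZMod p) L = 1})
    (hg : ∀ L₀ L₁ L₂ : {L : Submodule (ZMod p) V // Module.finrank (ZMod p) L = 1},
      (L₀ : Submodule (ZMod p) V) ≤ (L₁ : Submodule (ZMod p) V) ⊔ (L₂ : Submodule (ZMod p) V) ↔
      (g L₀ : Submodule (ZMod p) V) ≤ (g L₁ : Submodule (ZMod p) V) ⊔ (g L₂ : Submodule (ZMod p) V)) :
    ∃ φ : V ≃ₗ[ZMod p] V,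
      ∀ L : {L : Submodule (ZMod p) V // Module.finrank (ZMod p) L = 1},
        (g L : Submodule (ZMod p) V) =
          Submodule.map (φ : V →ₗ[ZMod p] V) (L : Submodule (ZMod p) V) :=
  stmt_2_general p V g hg
end

section
/- Assume in addition: (i) for every g ∈ G and all nonzero v, w ∈ V with Submodule.span (ZMod p) {v} = Submodule.span (ZMod p) {w}, one has Submodule.span (ZMod p) {g v} = Submodule.span (ZMod p) {g w}; and (ii) G preserves projective lines, i.e., for every g ∈ G and all nonzero u, v, w ∈ V: u ∈ Submodule.span (ZMod p) {v, w} if and only if g u ∈ Submodule.span (ZMod p) {g v, g w}. Then G acts on the one-dimensional subspaces of V like Aut(V): for every g ∈ G there exists a linear automorphism φ : V ≃ₗ[ZMod p] V such that Submodule.span (ZMod p) {g v} = Submodule.span (ZMod p) {φ v} for every v ∈ V. -/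
/-!
A collineation `g` of `V` maps a basis `b` to a basis, since `g` and `g⁻¹` preserve spans of
finite sets. Rescaling `g ∘ b` gives a linear automorphism `φ` such that `h = φ⁻¹ ∘ g` fixes
the lines through every `b i` and every `b i₀ + b i`. A line that is the intersection of two
planes, each spanned by two lines fixed by `h`, is again fixed by `h`. This gives the lines
through `b i₀ + t • b i` for all `t` (von Staudt's construction of `t + 1` from `t` in the span
of `b i₀, b i, b j`; over a prime field every `t` is reached from `0`), then the lines through
vectors with two nonzero coordinates, and all lines by induction on the number of nonzero
coordinates. Hence `g v = φ (h v)` spans the same line as `φ v`.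
-/

open Module Submodule Set Cardinal

section

variable {K V ι : Type*} [Field K] [AddCommGroup V] [Module K V]

theorem exists_mem_span_singleton_add_unit_smul {x y z : V} (hx : x ∈ span K {y, z})
    (hy : x ∉ K ∙ y) (hz : x ∉ K ∙ z) : ∃ d : Kˣ, x ∈ K ∙ (y + d • z) := by
  obtain ⟨α, β, rfl⟩ := mem_span_pair.1 hx
  have hα : α ≠ 0 := by
    rintro rfl
    exact hz (by simpa using smul_mem _ β (mem_span_singleton_self z))
  have hβ : β ≠ 0 := by
    rintro rfl
    exact hy (by simpa using smul_mem _ α (mem_span_singleton_self y))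
  refine ⟨Units.mk0 (β / α) (div_ne_zero hβ hα), mem_span_singleton.2 ⟨α, ?_⟩⟩
  simp only [Units.smul_mk0, smul_add, smul_smul]
  rw [mul_div_cancel₀ _ hα]

theorem span_pair_inf_span_pair_le {v₁ v₂ w₁ w₂ x : V}
    (h : ∀ α β γ δ : K, α • v₁ + β • v₂ = γ • w₁ + δ • w₂ → α • v₁ + β • v₂ ∈ K ∙ x) :
    span K {v₁, v₂} ⊓ span K {w₁, w₂} ≤ K ∙ x := by
  rintro y ⟨hy₁, hy₂⟩
  obtain ⟨α, β, rfl⟩ := mem_span_pair.1 hy₁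
  obtain ⟨γ, δ, hγδ⟩ := mem_span_pair.1 hy₂
  exact h α β γ δ hγδ.symm

theorem Module.Basis.add_notMem_span_singleton (b : Basis ι K V) {i j : ι} (hij : i ≠ j) :
    b i + b j ∉ K ∙ b i := by
  intro h
  obtain ⟨a, ha⟩ := mem_span_singleton.1 h
  simpa [hij] using congr(b.repr $ha j)

variable (K) in
structure IsCollineation_s3 (g : Equiv.Perm V) : Prop where
  map_zero : g 0 = 0
  mem_span_pair_iff : ∀ ⦃u v w : V⦄, u ≠ 0 → v ≠ 0 → w ≠ 0 →
    (u ∈ span K {v, w} ↔ g u ∈ span K {g v, g w})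

theorem LinearEquiv.isCollineation (φ : V ≃ₗ[K] V) : IsCollineation_s3 K φ.toEquiv where
  map_zero := φ.map_zero
  mem_span_pair_iff u v w _ _ _ := by
    simp only [LinearEquiv.coe_toEquiv, ← image_pair, span_image_linearEquiv, mem_map_equiv,
      LinearEquiv.symm_apply_apply]

namespace IsCollineation_s3

variable {g h : Equiv.Perm V}

theorem map_ne_zero (hg : IsCollineation_s3 K g) {v : V} (hv : v ≠ 0) : g v ≠ 0 :=
  fun h0 => hv (g.injective (h0.trans hg.map_zero.symm))

theorem map_mem_span_singleton (hg : IsCollineation_s3 K g) {u v : V} (hu : u ∈ K ∙ v) :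
    g u ∈ K ∙ g v := by
  rcases eq_or_ne u 0 with rfl | hu0
  · simp [hg.map_zero]
  have hv0 : v ≠ 0 := by rintro rfl; simp_all
  simpa using (hg.mem_span_pair_iff hu0 hv0 hv0).1 (by simpa using hu)

theorem map_mem_span_pair (hg : IsCollineation_s3 K g) {u v w : V} (hu : u ∈ span K {v, w}) :
    g u ∈ span K {g v, g w} := by
  rcases eq_or_ne u 0 with rfl | hu0
  · simp [hg.map_zero]
  rcases eq_or_ne v 0 with rfl | hv0
  · rw [span_insert_zero] at hu
    exact span_mono (by simp) (hg.map_mem_span_singleton hu)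
  rcases eq_or_ne w 0 with rfl | hw0
  · rw [pair_comm, span_insert_zero] at hu
    exact span_mono (by simp) (hg.map_mem_span_singleton hu)
  exact (hg.mem_span_pair_iff hu0 hv0 hw0).1 hu

theorem symm (hg : IsCollineation_s3 K g) : IsCollineation_s3 K g.symm where
  map_zero := g.symm_apply_eq.2 hg.map_zero.symm
  mem_span_pair_iff u v w hu hv hw := by
    have hne : ∀ {x : V}, x ≠ 0 → g.symm x ≠ 0 := fun hx h0 =>
      hx (by simpa [hg.map_zero] using congr(g $h0))
    rw [hg.mem_span_pair_iff (hne hu) (hne hv) (hne hw)]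
    simp

theorem trans (hg : IsCollineation_s3 K g) (hh : IsCollineation_s3 K h) :
    IsCollineation_s3 K (g.trans h) where
  map_zero := by simp [hg.map_zero, hh.map_zero]
  mem_span_pair_iff u v w hu hv hw := by
    rw [hg.mem_span_pair_iff hu hv hw,
      hh.mem_span_pair_iff (hg.map_ne_zero hu) (hg.map_ne_zero hv) (hg.map_ne_zero hw)]
    rfl

theorem map_mem_span_singleton_iff (hg : IsCollineation_s3 K g) {u v : V} :
    g u ∈ K ∙ g v ↔ u ∈ K ∙ v :=
  ⟨fun h => by simpa using hg.symm.map_mem_span_singleton h, hg.map_mem_span_singleton⟩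

theorem map_mem_span (hg : IsCollineation_s3 K g) {s : Set V} {u : V} (hu : u ∈ span K s) :
    g u ∈ span K (g '' s) := by
  classical
  obtain ⟨T, hTs, huT⟩ := mem_span_finite_of_mem_span hu
  refine span_mono (image_mono hTs) ?_
  clear hu hTs
  induction T using Finset.induction_on generalizing u with
  | empty => simp_all [hg.map_zero]
  | insert v T _ ih =>
    rw [Finset.coe_insert, mem_span_insert] at huT
    obtain ⟨a, z, hz, rfl⟩ := huT
    have hpair : g (a • v + z) ∈ span K {g v, g z} :=
      hg.map_mem_span_pair (mem_span_pair.2 ⟨a, 1, by simp⟩)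
    refine span_le.2 (pair_subset ?_ ?_) hpair
    · exact subset_span (mem_image_of_mem _ (by simp))
    · exact span_mono (image_mono (by simp)) (ih hz)

theorem linearIndependent_comp (hg : IsCollineation_s3 K g) {v : ι → V}
    (hv : LinearIndependent K v) : LinearIndependent K (g ∘ v) := by
  rw [linearIndependent_iff_notMem_span] at hv ⊢
  intro i hi
  apply hv i
  simpa [image_image] using hg.symm.map_mem_span hi

theorem span_range_comp (hg : IsCollineation_s3 K g) {v : ι → V}
    (hv : span K (range v) = ⊤) : span K (range (g ∘ v)) = ⊤ := by
  refine eq_top_iff'.2 fun w => ?_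
  simpa [range_comp] using hg.map_mem_span (hv ▸ mem_top : g.symm w ∈ span K (range v))

theorem exists_linearEquiv_agrees_on_frame (hg : IsCollineation_s3 K g) (b : Basis ι K V)
    (i₀ : ι) :
    ∃ φ : V ≃ₗ[K] V, (∀ i, g (b i) ∈ K ∙ φ (b i)) ∧
      ∀ i ≠ i₀, g (b i₀ + b i) ∈ K ∙ φ (b i₀ + b i) := by
  classical
  let B := Basis.mk (hg.linearIndependent_comp b.linearIndependent)
    (hg.span_range_comp b.span_eq).ge
  have hB : ∀ i, B i = g (b i) := fun i => Basis.mk_apply _ _ i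
  have hd : ∀ i, ∃ d : Kˣ, i ≠ i₀ → g (b i₀ + b i) ∈ K ∙ (B i₀ + d • B i) := by
    intro i
    by_cases hi : i = i₀
    · exact ⟨1, fun hne => (hne hi).elim⟩
    have h₀ := b.add_notMem_span_singleton (Ne.symm hi)
    have h₁ := b.add_notMem_span_singleton hi
    rw [add_comm] at h₁
    rw [← hg.map_mem_span_singleton_iff] at h₀ h₁
    obtain ⟨d, hd⟩ := exists_mem_span_singleton_add_unit_smul
      (hg.map_mem_span_pair (mem_span_pair.2 ⟨1, 1, by simp⟩)) h₀ h₁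
    exact ⟨d, fun _ => by simpa [hB] using hd⟩
  choose d hd using hd
  refine ⟨b.equiv (B.unitsSMul (Function.update d i₀ 1)) (Equiv.refl ι), fun i => ?_,
    fun i hi => ?_⟩
  · rw [b.equiv_apply, Basis.unitsSMul_apply, span_singleton_group_smul_eq, Equiv.refl_apply,
      hB]
    exact mem_span_singleton_self _
  · simpa [b.equiv_apply, Basis.unitsSMul_apply, hi] using hd i hi

theorem map_smul_mem_span_singleton_smul (hh : IsCollineation_s3 K h) {v : V} (hv : h v ∈ K ∙ v)
    (c : K) : h (c • v) ∈ K ∙ (c • v) := by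
  rcases eq_or_ne c 0 with rfl | hc
  · simp [hh.map_zero]
  rw [span_singleton_smul_eq (isUnit_iff_ne_zero.2 hc)]
  exact (span_singleton_le_iff_mem _ _).2 hv
    (hh.map_mem_span_singleton (smul_mem _ c (mem_span_singleton_self v)))

theorem map_mem_span_singleton_of_mem_inf (hh : IsCollineation_s3 K h) {v₁ v₂ w₁ w₂ x : V}
    (hv₁ : h v₁ ∈ K ∙ v₁) (hv₂ : h v₂ ∈ K ∙ v₂) (hw₁ : h w₁ ∈ K ∙ w₁) (hw₂ : h w₂ ∈ K ∙ w₂)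
    (hxv : x ∈ span K {v₁, v₂}) (hxw : x ∈ span K {w₁, w₂})
    (hinf : span K {v₁, v₂} ⊓ span K {w₁, w₂} ≤ K ∙ x) : h x ∈ K ∙ x := by
  have hle : ∀ {y₁ y₂ : V}, h y₁ ∈ K ∙ y₁ → h y₂ ∈ K ∙ y₂ →
      span K {h y₁, h y₂} ≤ span K {y₁, y₂} := fun hy₁ hy₂ =>
    span_le.2 (pair_subset (span_mono (by simp) hy₁) (span_mono (by simp) hy₂))
  exact hinf ⟨hle hv₁ hv₂ (hh.map_mem_span_pair hxv), hle hw₁ hw₂ (hh.map_mem_span_pair hxw)⟩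

theorem map_mem_span_singleton_add_one_smul (hh : IsCollineation_s3 K h) (b : Basis ι K V)
    (hb : ∀ i, h (b i) ∈ K ∙ b i) {i₀ i j : ι} (hi : i ≠ i₀) (hj₀ : j ≠ i₀) (hji : j ≠ i)
    (hi₁ : h (b i₀ + b i) ∈ K ∙ (b i₀ + b i)) (hj₁ : h (b i₀ + b j) ∈ K ∙ (b i₀ + b j))
    {t : K} (ht : h (b i₀ + t • b i) ∈ K ∙ (b i₀ + t • b i)) :
    h (b i₀ + (t + 1) • b i) ∈ K ∙ (b i₀ + (t + 1) • b i) := by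
  have hD : h (b i - b j) ∈ K ∙ (b i - b j) := by
    refine hh.map_mem_span_singleton_of_mem_inf (hb i) (hb j) hi₁ hj₁
      (mem_span_pair.2 ⟨1, -1, by module⟩) (mem_span_pair.2 ⟨1, -1, by module⟩)
      (span_pair_inf_span_pair_le fun α β γ δ hE => ?_)
    have h₀ : γ + δ = 0 := by simpa [hi, hj₀] using congr(b.repr $hE i₀).symm
    rw [hE]
    exact mem_span_singleton.2 ⟨γ, by rw [show δ = -γ by linear_combination h₀]; module⟩
  have hC : h (b i₀ + t • b i + b j) ∈ K ∙ (b i₀ + t • b i + b j) := by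
    refine hh.map_mem_span_singleton_of_mem_inf ht (hb j) hj₁ (hb i)
      (mem_span_pair.2 ⟨1, 1, by module⟩) (mem_span_pair.2 ⟨1, t, by module⟩)
      (span_pair_inf_span_pair_le fun α β γ δ hE => ?_)
    have h₀ : α = γ := by simpa [hi.symm, hj₀] using congr(b.repr $hE i₀)
    have h₁ : β = γ := by simpa [hj₀.symm, hji] using congr(b.repr $hE j)
    exact mem_span_singleton.2 ⟨α, by rw [h₁, ← h₀]; module⟩
  refine hh.map_mem_span_singleton_of_mem_inf hC hD (hb i₀) (hb i)
    (mem_span_pair.2 ⟨1, 1, by module⟩) (mem_span_pair.2 ⟨1, t + 1, by module⟩)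
    (span_pair_inf_span_pair_le fun α β γ δ hE => ?_)
  have h₁ : α - β = 0 := by simpa [hj₀, hji, sub_eq_add_neg] using congr(b.repr $hE j)
  exact mem_span_singleton.2 ⟨α, by rw [show β = α by linear_combination -h₁]; module⟩

theorem map_mem_span_singleton_add_smul (hK : Function.Surjective (Nat.cast : ℕ → K))
    (hh : IsCollineation_s3 K h) (b : Basis ι K V) (hb : ∀ i, h (b i) ∈ K ∙ b i) {i₀ : ι}
    (hb₀ : ∀ i ≠ i₀, h (b i₀ + b i) ∈ K ∙ (b i₀ + b i)) (hι : 3 ≤ #ι) {i : ι} (hi : i ≠ i₀)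
    (t : K) : h (b i₀ + t • b i) ∈ K ∙ (b i₀ + t • b i) := by
  obtain ⟨j, hj⟩ := exists_notMem_of_length_lt [i₀, i] (lt_of_lt_of_le (by norm_num) hι)
  simp only [List.mem_cons, List.not_mem_nil, or_false, not_or] at hj
  obtain ⟨n, rfl⟩ := hK t
  induction n with
  | zero => simpa using hb i₀
  | succ n ih =>
    push_cast
    exact hh.map_mem_span_singleton_add_one_smul b hb hi hj.1 hj.2 (hb₀ i hi) (hb₀ j hj.1) ih

theorem map_mem_span_singleton_smul_add_smul (hK : Function.Surjective (Nat.cast : ℕ → K))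
    (hh : IsCollineation_s3 K h) (b : Basis ι K V) (hb : ∀ i, h (b i) ∈ K ∙ b i) {i₀ : ι}
    (hb₀ : ∀ i ≠ i₀, h (b i₀ + b i) ∈ K ∙ (b i₀ + b i)) (hι : 3 ≤ #ι) (i j : ι) (s t : K) :
    h (s • b i + t • b j) ∈ K ∙ (s • b i + t • b j) := by
  have axis : ∀ {k}, k ≠ i₀ → ∀ s t : K,
      h (s • b i₀ + t • b k) ∈ K ∙ (s • b i₀ + t • b k) := by
    intro k hk s t
    rcases eq_or_ne s 0 with rfl | hs
    · simpa using hh.map_smul_mem_span_singleton_smul (hb k) t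
    have hst : s • b i₀ + t • b k = s • (b i₀ + (t / s) • b k) := by
      rw [smul_add, smul_smul, mul_div_cancel₀ _ hs]
    rw [hst]
    exact hh.map_smul_mem_span_singleton_smul
      (hh.map_mem_span_singleton_add_smul hK b hb hb₀ hι hk (t / s)) s
  rcases eq_or_ne i j with rfl | hij
  · rw [← add_smul]
    exact hh.map_smul_mem_span_singleton_smul (hb i) _
  rcases eq_or_ne i i₀ with rfl | hi
  · exact axis hij.symm s t
  rcases eq_or_ne j i₀ with rfl | hj
  · rw [add_comm]
    exact axis hi t s
  refine hh.map_mem_span_singleton_of_mem_inf (hb i) (hb j) (axis hi 1 s) (axis hj 1 (-t))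
    (mem_span_pair.2 ⟨s, t, rfl⟩) (mem_span_pair.2 ⟨1, -1, by module⟩)
    (span_pair_inf_span_pair_le fun α β γ δ hE => ?_)
  have h₀ : γ + δ = 0 := by simpa [hi, hj] using congr(b.repr $hE i₀).symm
  rw [hE]
  exact mem_span_singleton.2 ⟨γ, by rw [show δ = -γ by linear_combination h₀]; module⟩

theorem map_mem_span_singleton_self (hK : Function.Surjective (Nat.cast : ℕ → K))
    (hh : IsCollineation_s3 K h) (b : Basis ι K V) (hb : ∀ i, h (b i) ∈ K ∙ b i) {i₀ : ι}
    (hb₀ : ∀ i ≠ i₀, h (b i₀ + b i) ∈ K ∙ (b i₀ + b i)) (hι : 3 ≤ #ι) (v : V) :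
    h v ∈ K ∙ v := by
  classical
  suffices ∀ n, ∀ f : ι →₀ K, f.support.card = n → h (b.repr.symm f) ∈ K ∙ b.repr.symm f by
    simpa using this _ (b.repr v) rfl
  intro n
  induction n with
  | zero =>
    intro f hf
    rw [Finset.card_eq_zero, Finsupp.support_eq_empty] at hf
    simp [hf, hh.map_zero]
  | succ n ih =>
    intro f hf
    obtain ⟨i, hi⟩ : f.support.Nonempty := Finset.card_pos.1 (by omega)
    have hsplit : ∀ k, b.repr.symm f = f k • b k + b.repr.symm (f.erase k) := fun k => by
      rw [← b.repr_symm_single, ← map_add, Finsupp.single_add_erase]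
    have hcard : ∀ k ∈ f.support, (f.erase k).support.card = n := fun k hk => by
      rw [Finsupp.support_erase, Finset.card_erase_of_mem hk, hf, Nat.add_sub_cancel]
    rcases le_or_gt n 1 with hn | hn
    · have : Nonempty ι := ⟨i⟩
      obtain ⟨j, hj⟩ := Finsupp.card_support_le_one.1 ((hcard i hi).le.trans hn)
      rw [hsplit i, hj, b.repr_symm_single]
      exact hh.map_mem_span_singleton_smul_add_smul hK b hb hb₀ hι i j _ _
    obtain ⟨j, hj, k, hk, hjk⟩ := Finset.one_lt_card.1 (hcard i hi ▸ hn)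
    rw [Finsupp.support_erase, Finset.mem_erase] at hj hk
    refine hh.map_mem_span_singleton_of_mem_inf
      (hh.map_smul_mem_span_singleton_smul (hb i) (f i)) (ih _ (hcard i hi))
      (hh.map_smul_mem_span_singleton_smul (hb j) (f j)) (ih _ (hcard j hj.2))
      (mem_span_pair.2 ⟨1, 1, by rw [one_smul, one_smul, ← hsplit]⟩)
      (mem_span_pair.2 ⟨1, 1, by rw [one_smul, one_smul, ← hsplit]⟩)
      (span_pair_inf_span_pair_le fun α β γ δ hE => ?_)
    have hαδ : α = δ := by
      simpa [hj.1.symm, Finsupp.mem_support_iff.1 hi] using congr(b.repr $hE i)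
    have hβδ : β = δ := by
      simpa [hk.1, hjk.symm, Finsupp.mem_support_iff.1 hk.2] using congr(b.repr $hE k)
    exact mem_span_singleton.2 ⟨α, by rw [hsplit i, hβδ, ← hαδ, smul_add]⟩

theorem exists_linearEquiv (hK : Function.Surjective (Nat.cast : ℕ → K))
    (hV : 3 ≤ Module.rank K V) {g : Equiv.Perm V} (hg : IsCollineation_s3 K g) :
    ∃ φ : V ≃ₗ[K] V, ∀ v, K ∙ g v = K ∙ φ v := by
  let b := Basis.ofVectorSpace K V
  have hι : 3 ≤ #(Basis.ofVectorSpaceIndex K V) := b.mk_eq_rank''.symm ▸ hV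
  obtain ⟨i₀⟩ := mk_ne_zero_iff.1 (lt_of_lt_of_le (by norm_num) hι).ne'
  obtain ⟨φ, hφb, hφb₀⟩ := hg.exists_linearEquiv_agrees_on_frame b i₀
  have hh : IsCollineation_s3 K (g.trans φ.symm.toEquiv) := hg.trans φ.symm.isCollineation
  have hsymm : ∀ {x y : V}, x ∈ K ∙ φ y → φ.symm x ∈ K ∙ y := fun hx => by
    obtain ⟨c, rfl⟩ := mem_span_singleton.1 hx
    exact mem_span_singleton.2 ⟨c, by simp⟩
  refine ⟨φ, fun v => ?_⟩
  rcases eq_or_ne v 0 with rfl | hv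
  · simp [hg.map_zero]
  obtain ⟨c, hc⟩ := mem_span_singleton.1 <| hh.map_mem_span_singleton_self hK b
    (fun i => hsymm (hφb i)) (fun i hi => hsymm (hφb₀ i hi)) hι v
  have hgv : g v = c • φ v := by
    rw [← φ.apply_symm_apply (g v), ← map_smul]
    exact congr(φ $hc.symm)
  have hc0 : c ≠ 0 := by
    rintro rfl
    exact hg.map_ne_zero hv (by simpa using hgv)
  rw [hgv, span_singleton_smul_eq (isUnit_iff_ne_zero.2 hc0)]

end IsCollineation_s3

end

theorem stmt_3_general (p : ℕ) [Fact p.Prime]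
    (V : Type*) [AddCommGroup V] [Module (ZMod p) V] [Infinite V]
    (G : Subgroup (Equiv.Perm V))
    (hzero : ∀ g ∈ G, g 0 = (0 : V))
    (h2 : ∀ g ∈ G, ∀ u v w : V, u ≠ 0 → v ≠ 0 → w ≠ 0 →
      (u ∈ Submodule.span (ZMod p) ({v, w} : Set V) ↔
        g u ∈ Submodule.span (ZMod p) ({g v, g w} : Set V))) :
    ∀ g ∈ G, ∃ φ : V ≃ₗ[ZMod p] V, ∀ v : V,
      Submodule.span (ZMod p) {g v} = Submodule.span (ZMod p) {φ v} := by
  intro g hg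
  have hV : 3 ≤ Module.rank (ZMod p) V := by
    have : ¬ Module.Finite (ZMod p) V := fun _ =>
      (Module.finite_of_finite (ZMod p) (M := V)).false
    rw [← Module.rank_lt_aleph0_iff, not_lt] at this
    exact (natCast_lt_aleph0 (n := 3)).le.trans this
  exact (IsCollineation_s3.mk (hzero g hg) (h2 g hg)).exists_linearEquiv
    ZMod.natCast_zmod_surjective hV

/-- If `G` (closed, containing `Aut(V)`, fixing `0`) preserves the relation of
spanning the same line and preserves projective lines, then `G` acts on the
one-dimensional subspaces of `V` like `Aut(V)`. -/
theorem stmt_3 (p : ℕ) [Fact p.Prime] (hp : p ≠ 2)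
    (V : Type*) [AddCommGroup V] [Module (ZMod p) V] [Countable V] [Infinite V]
    (G : Subgroup (Equiv.Perm V))
    (hclosed : ∀ f : Equiv.Perm V, (∀ F : Finset V, ∃ g ∈ G, ∀ x ∈ F, g x = f x) → f ∈ G)
    (hAut : ∀ φ : V ≃ₗ[ZMod p] V, (φ.toEquiv : Equiv.Perm V) ∈ G)
    (hzero : ∀ g ∈ G, g 0 = (0 : V))
    (h1 : ∀ g ∈ G, ∀ v w : V, v ≠ 0 → w ≠ 0 →
      Submodule.span (ZMod p) {v} = Submodule.span (ZMod p) {w} →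
      Submodule.span (ZMod p) {g v} = Submodule.span (ZMod p) {g w})
    (h2 : ∀ g ∈ G, ∀ u v w : V, u ≠ 0 → v ≠ 0 → w ≠ 0 →
      (u ∈ Submodule.span (ZMod p) ({v, w} : Set V) ↔
        g u ∈ Submodule.span (ZMod p) ({g v, g w} : Set V))) :
    ∀ g ∈ G, ∃ φ : V ≃ₗ[ZMod p] V, ∀ v : V,
      Submodule.span (ZMod p) {g v} = Submodule.span (ZMod p) {φ v} :=
  stmt_3_general p V G hzero h2
end

section
/- Let S be a finite subset of V, let v ∈ V, let G_S = {g ∈ G | ∀ s ∈ S, g s = s} be the pointwise stabilizer of S in G, and let O = {g v | g ∈ G_S} be the orbit of v under G_S. Then the following are equivalent: (1) O is infinite; (2) O contains some vector u with u ∉ Submodule.span (ZMod p) S; (3) every vector of V not lying in Submodule.span (ZMod p) S belongs to O. -/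
/-!
Linear automorphisms of `V` fixing `span S` pointwise act transitively on the complement of
`span S`, and they lie in `G`. So as soon as the orbit leaves `span S`
it contains the whole complement, which is infinite; conversely `span S` is finite, so an
infinite orbit must leave it.
-/

open Module Submodule

section

variable {K V : Type*} [Field K] [AddCommGroup V] [Module K V]

theorem Submodule.exists_le_ker_apply_ne_zero_apply_ne_zero {W : Submodule K V} {u w : V}
    (hu : u ∉ W) (hw : w ∉ W) : ∃ f : Dual K V, W ≤ LinearMap.ker f ∧ f u ≠ 0 ∧ f w ≠ 0 := by
  obtain ⟨f, hfu, hfW⟩ := W.exists_dual_map_eq_bot_of_notMem hu inferInstance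
  obtain ⟨g, hgw, hgW⟩ := W.exists_dual_map_eq_bot_of_notMem hw inferInstance
  rw [← LinearMap.le_ker_iff_map] at hfW hgW
  by_cases hfw : f w = 0
  · by_cases hgu : g u = 0
    · -- `f` and `g` each miss one of the two vectors, so their sum sees both
      exact ⟨f + g, fun x hx => by simp [LinearMap.mem_ker.mp (hfW hx),
        LinearMap.mem_ker.mp (hgW hx)], by simpa [hgu], by simpa [hfw]⟩
    · exact ⟨g, hgW, hgu, hgw⟩
  · exact ⟨f, hfW, hfu, hfw⟩

/-- The automorphism is the dilatransvection `x ↦ x + f x • (w - u)` for a form `f` vanishing on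
`W` with `f u = 1` and `f w ≠ 0`. -/
theorem Submodule.exists_linearEquiv_eqOn_apply_eq {W : Submodule K V} {u w : V}
    (hu : u ∉ W) (hw : w ∉ W) : ∃ φ : V ≃ₗ[K] V, (∀ x ∈ W, φ x = x) ∧ φ u = w := by
  obtain ⟨f₀, hW, hu₀, hw₀⟩ := W.exists_le_ker_apply_ne_zero_apply_ne_zero hu hw
  set f := (f₀ u)⁻¹ • f₀
  have hfu : f u = 1 := inv_mul_cancel₀ hu₀
  have hunit : IsUnit (1 + f (w - u)) := by
    rw [map_sub, hfu, add_sub_cancel]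
    exact (mul_ne_zero (inv_ne_zero hu₀) hw₀).isUnit
  refine ⟨LinearEquiv.dilatransvection hunit, fun x hx => ?_, ?_⟩
  · simp [LinearEquiv.dilatransvection.apply, f, LinearMap.mem_ker.mp (hW hx)]
  · rw [LinearEquiv.dilatransvection.apply, hfu, one_smul, add_sub_cancel]

def stabilizerOrbit (G : Subgroup (Equiv.Perm V)) (S : Finset V) (v : V) : Set V :=
  {u : V | ∃ g ∈ G, (∀ s ∈ S, g s = s) ∧ g v = u}

theorem compl_span_subset_stabilizerOrbit {G : Subgroup (Equiv.Perm V)}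
    (hAut : ∀ φ : V ≃ₗ[K] V, (φ.toEquiv : Equiv.Perm V) ∈ G) {S : Finset V} {v u : V}
    (hu : u ∈ stabilizerOrbit G S v) (hu' : u ∉ span K (S : Set V)) :
    (span K (S : Set V) : Set V)ᶜ ⊆ stabilizerOrbit G S v := by
  obtain ⟨g, hg, hgS, rfl⟩ := hu
  intro w hw
  obtain ⟨φ, hφW, hφu⟩ := exists_linearEquiv_eqOn_apply_eq hu' hw
  refine ⟨φ.toEquiv * g, G.mul_mem (hAut φ) hg, fun s hs => ?_, hφu⟩
  simp [hgS s hs, hφW s (subset_span hs)]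

variable [Finite K]

theorem finite_span_finset (S : Finset V) : (span K (S : Set V) : Set V).Finite :=
  have : Finite (span K (S : Set V)) := Module.finite_of_finite K
  Set.toFinite _

theorem exists_mem_stabilizerOrbit_notMem_span {G : Subgroup (Equiv.Perm V)} {S : Finset V}
    {v : V} (h : (stabilizerOrbit G S v).Infinite) :
    ∃ u ∈ stabilizerOrbit G S v, u ∉ span K (S : Set V) :=
  (h.sdiff (finite_span_finset S)).nonempty

theorem stabilizerOrbit_infinite_of_compl_span_subset [Infinite V]
    {G : Subgroup (Equiv.Perm V)} {S : Finset V} {v : V}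
    (h : (span K (S : Set V) : Set V)ᶜ ⊆ stabilizerOrbit G S v) :
    (stabilizerOrbit G S v).Infinite :=
  (finite_span_finset S).infinite_compl.mono h

end

theorem stmt_5_general (p : ℕ) [Fact p.Prime]
    (V : Type*) [AddCommGroup V] [Module (ZMod p) V] [Infinite V]
    (G : Subgroup (Equiv.Perm V))
    (hAut : ∀ φ : V ≃ₗ[ZMod p] V, (φ.toEquiv : Equiv.Perm V) ∈ G)
    (S : Finset V) (v : V) :
    ({u : V | ∃ g ∈ G, (∀ s ∈ S, g s = s) ∧ g v = u}.Infinite ↔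
      ∃ u ∈ {u : V | ∃ g ∈ G, (∀ s ∈ S, g s = s) ∧ g v = u},
        u ∉ Submodule.span (ZMod p) (S : Set V)) ∧
    ({u : V | ∃ g ∈ G, (∀ s ∈ S, g s = s) ∧ g v = u}.Infinite ↔
      ∀ u : V, u ∉ Submodule.span (ZMod p) (S : Set V) →
        u ∈ {u : V | ∃ g ∈ G, (∀ s ∈ S, g s = s) ∧ g v = u}) := by
  show ((stabilizerOrbit G S v).Infinite ↔ _) ∧ ((stabilizerOrbit G S v).Infinite ↔ _)
  have hcompl : (∃ u ∈ stabilizerOrbit G S v, u ∉ span (ZMod p) (S : Set V)) →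
      (span (ZMod p) (S : Set V) : Set V)ᶜ ⊆ stabilizerOrbit G S v :=
    fun ⟨_, hu, hu'⟩ => compl_span_subset_stabilizerOrbit hAut hu hu'
  exact ⟨⟨exists_mem_stabilizerOrbit_notMem_span,
      fun h => stabilizerOrbit_infinite_of_compl_span_subset (hcompl h)⟩,
    ⟨fun h => hcompl (exists_mem_stabilizerOrbit_notMem_span h),
      stabilizerOrbit_infinite_of_compl_span_subset⟩⟩

/-- For a finite set `S ⊆ V` and `v ∈ V`, the orbit of `v` under the pointwise
stabilizer of `S` in `G` is infinite iff it contains some vector outside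
`span S` iff it contains every vector outside `span S`. -/
theorem stmt_5 (p : ℕ) [Fact p.Prime] (hp : p ≠ 2)
    (V : Type*) [AddCommGroup V] [Module (ZMod p) V] [Countable V] [Infinite V]
    (G : Subgroup (Equiv.Perm V))
    (hclosed : ∀ f : Equiv.Perm V, (∀ F : Finset V, ∃ g ∈ G, ∀ x ∈ F, g x = f x) → f ∈ G)
    (hAut : ∀ φ : V ≃ₗ[ZMod p] V, (φ.toEquiv : Equiv.Perm V) ∈ G)
    (hzero : ∀ g ∈ G, g 0 = (0 : V))
    (S : Finset V) (v : V) :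
    ({u : V | ∃ g ∈ G, (∀ s ∈ S, g s = s) ∧ g v = u}.Infinite ↔
      ∃ u ∈ {u : V | ∃ g ∈ G, (∀ s ∈ S, g s = s) ∧ g v = u},
        u ∉ Submodule.span (ZMod p) (S : Set V)) ∧
    ({u : V | ∃ g ∈ G, (∀ s ∈ S, g s = s) ∧ g v = u}.Infinite ↔
      ∀ u : V, u ∉ Submodule.span (ZMod p) (S : Set V) →
        u ∈ {u : V | ∃ g ∈ G, (∀ s ∈ S, g s = s) ∧ g v = u}) :=
  stmt_5_general p V G hAut S v
end

section
/- Let S ⊆ V with 0 ∉ S and let k ≥ 1. Then exactly one of the following holds: (1) A_k(S) = ∅; (2) there exist a submodule W of V with finrank (ZMod p) W = k and g ∈ G such that A_k(S) = {g x | x ∈ W}; (3) A_k(S) = V. -/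
/-!
If `g₀ ∈ G` maps `S` into a `k`-dimensional subspace `W₀`, then `A_k(S)` contains `g₀⁻¹ W₀`.
Linear automorphisms fixing `W₀` pointwise act transitively on `V ∖ W₀` (a single
dilatransvection suffices), and composing with them shows that `A_k(S)` contains either none
or all of the vectors outside `g₀⁻¹ W₀`. So `A_k(S)` is empty, equal to `g₀⁻¹ W₀`, or all of
`V`; the last two are distinct because `W₀` is finite and `V` is not.
-/

/-- `Ak p V G k S` is the set of vectors `v` such that `{v} ∪ S` can be mapped
into a `k`-dimensional subspace of `V` by an element of `G`. -/
def Ak (p : ℕ) (V : Type*) [AddCommGroup V] [Module (ZMod p) V]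
    (G : Subgroup (Equiv.Perm V)) (k : ℕ) (S : Set V) : Set V :=
  {v : V | ∃ g ∈ G, ∃ W : Submodule (ZMod p) V,
    Module.finrank (ZMod p) W = k ∧ g v ∈ W ∧ ∀ s ∈ S, g s ∈ W}

open Module

namespace Submodule

variable {K V : Type*} [Field K] [AddCommGroup V] [Module K V]

theorem exists_le_ker_apply_eq_one_apply_ne_zero (U : Submodule K V) {v x : V}
    (hv : v ∉ U) (hx : x ∉ U) :
    ∃ f : Dual K V, U ≤ LinearMap.ker f ∧ f v = 1 ∧ f x ≠ 0 := by
  obtain ⟨f₁, hUf₁, hf₁v⟩ := LinearMap.exists_extend_of_notMem (0 : U →ₗ[K] K) hv 1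
  have hU₁ : U ≤ LinearMap.ker f₁ := fun u hu => by simpa using congr($hUf₁ ⟨u, hu⟩)
  by_cases hf₁x : f₁ x ≠ 0
  · exact ⟨f₁, hU₁, hf₁v, hf₁x⟩
  push Not at hf₁x
  have hxv : x ∉ U ⊔ K ∙ v := by
    rintro hx'
    obtain ⟨u, hu, w, hw, rfl⟩ := mem_sup.mp hx'
    obtain ⟨c, rfl⟩ := mem_span_singleton.mp hw
    have hc : c = 0 := by simpa [LinearMap.mem_ker.mp (hU₁ hu), hf₁v] using hf₁x
    exact hx (by simpa [hc] using hu)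
  obtain ⟨f₂, hUf₂, hf₂x⟩ := LinearMap.exists_extend_of_notMem (0 : ↥(U ⊔ K ∙ v) →ₗ[K] K) hxv 1
  have hU₂ : U ⊔ K ∙ v ≤ LinearMap.ker f₂ := fun u hu => by simpa using congr($hUf₂ ⟨u, hu⟩)
  have hf₂v : f₂ v = 0 := hU₂ (mem_sup_right (mem_span_singleton_self v))
  refine ⟨f₁ + f₂, fun u hu => ?_, by simp [hf₁v, hf₂v], by simp [hf₁x, hf₂x]⟩
  simp [LinearMap.mem_ker.mp (hU₁ hu), LinearMap.mem_ker.mp (hU₂ (mem_sup_left hu))]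

theorem exists_linearEquiv_fixing_apply_eq (U : Submodule K V) {v x : V}
    (hv : v ∉ U) (hx : x ∉ U) :
    ∃ α : V ≃ₗ[K] V, (∀ u ∈ U, α u = u) ∧ α v = x := by
  obtain ⟨f, hUf, hfv, hfx⟩ := U.exists_le_ker_apply_eq_one_apply_ne_zero hv hx
  have hunit : IsUnit (1 + f (x - v)) := by simpa [hfv] using hfx
  refine ⟨LinearEquiv.dilatransvection hunit, fun u hu => ?_, ?_⟩
  · simp [LinearEquiv.dilatransvection.apply, LinearMap.mem_ker.mp (hUf hu)]
  · simp [LinearEquiv.dilatransvection.apply, hfv]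

theorem image_ne_univ_of_finrank_pos [Finite K] [Infinite V] {W : Submodule K V}
    (hW : 0 < finrank K W) (f : V → V) : f '' (W : Set V) ≠ Set.univ := by
  have := FiniteDimensional.of_finrank_pos hW
  have : Finite W := Module.finite_of_finite K
  exact fun h => Set.infinite_univ (h ▸ (Set.toFinite (W : Set V)).image f)

end Submodule

section Ak

variable {p : ℕ} [Fact p.Prime] {V : Type*} [AddCommGroup V] [Module (ZMod p) V]
  {G : Subgroup (Equiv.Perm V)} {k : ℕ} {S : Set V} {g₀ : Equiv.Perm V}
  {W₀ : Submodule (ZMod p) V}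

theorem mem_Ak_of_apply_notMem (hAut : ∀ φ : V ≃ₗ[ZMod p] V, (φ.toEquiv : Equiv.Perm V) ∈ G)
    (hg₀ : g₀ ∈ G) (hS : ∀ s ∈ S, g₀ s ∈ W₀) {u v : V} (hu : g₀ u ∉ W₀) (hv : g₀ v ∉ W₀)
    (hvA : v ∈ Ak p V G k S) : u ∈ Ak p V G k S := by
  obtain ⟨g, hg, W, hWk, hgv, hgS⟩ := hvA
  obtain ⟨α, hα, hαu⟩ := W₀.exists_linearEquiv_fixing_apply_eq hu hv
  refine ⟨g * g₀⁻¹ * α.toEquiv * g₀, ?_, W, hWk, ?_, fun s hs => ?_⟩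
  · exact G.mul_mem (G.mul_mem (G.mul_mem hg (G.inv_mem hg₀)) (hAut α)) hg₀
  · simpa [Equiv.Perm.mul_apply, hαu] using hgv
  · simpa [Equiv.Perm.mul_apply, hα _ (hS s hs)] using hgS s hs

theorem Ak_eq_univ_or_eq_image (hAut : ∀ φ : V ≃ₗ[ZMod p] V, (φ.toEquiv : Equiv.Perm V) ∈ G)
    (hg₀ : g₀ ∈ G) (hW₀ : finrank (ZMod p) W₀ = k) (hS : ∀ s ∈ S, g₀ s ∈ W₀) :
    Ak p V G k S = Set.univ ∨ Ak p V G k S = (fun x => g₀⁻¹ x) '' (W₀ : Set V) := by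
  have hW₀A : ∀ v, g₀ v ∈ W₀ → v ∈ Ak p V G k S := fun v hv => ⟨g₀, hg₀, W₀, hW₀, hv, hS⟩
  by_cases h : ∃ v ∈ Ak p V G k S, g₀ v ∉ W₀
  · obtain ⟨v, hvA, hv⟩ := h
    refine Or.inl (Set.eq_univ_of_forall fun u => ?_)
    by_cases hu : g₀ u ∈ W₀
    · exact hW₀A u hu
    · exact mem_Ak_of_apply_notMem hAut hg₀ hS hu hv hvA
  · push Not at h
    refine Or.inr (Set.ext fun v => ⟨fun hv => ⟨g₀ v, h v hv, by simp⟩, ?_⟩)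
    rintro ⟨w, hw, rfl⟩
    exact hW₀A _ (by simpa using hw)

end Ak

theorem stmt_6_general (p : ℕ) [Fact p.Prime]
    (V : Type*) [AddCommGroup V] [Module (ZMod p) V] [Infinite V]
    (G : Subgroup (Equiv.Perm V))
    (hAut : ∀ φ : V ≃ₗ[ZMod p] V, (φ.toEquiv : Equiv.Perm V) ∈ G)
    (S : Set V) (k : ℕ) (hk : 1 ≤ k) :
    (Ak p V G k S = ∅ ∧
      ¬ (∃ W : Submodule (ZMod p) V, Module.finrank (ZMod p) W = k ∧
          ∃ g ∈ G, Ak p V G k S = (fun x => g x) '' (W : Set V)) ∧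
      Ak p V G k S ≠ Set.univ) ∨
    (Ak p V G k S ≠ ∅ ∧
      (∃ W : Submodule (ZMod p) V, Module.finrank (ZMod p) W = k ∧
          ∃ g ∈ G, Ak p V G k S = (fun x => g x) '' (W : Set V)) ∧
      Ak p V G k S ≠ Set.univ) ∨
    (Ak p V G k S ≠ ∅ ∧
      ¬ (∃ W : Submodule (ZMod p) V, Module.finrank (ZMod p) W = k ∧
          ∃ g ∈ G, Ak p V G k S = (fun x => g x) '' (W : Set V)) ∧
      Ak p V G k S = Set.univ) := by
  rcases Set.eq_empty_or_nonempty (Ak p V G k S) with hA | hA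
  · refine Or.inl ⟨hA, ?_, hA ▸ Set.empty_ne_univ⟩
    rintro ⟨W, -, g, -, himage⟩
    exact (Set.Nonempty.image _ ⟨0, W.zero_mem⟩).ne_empty (himage ▸ hA)
  have not_univ_of_image : ∀ W : Submodule (ZMod p) V, finrank (ZMod p) W = k →
      ∀ g : Equiv.Perm V, (fun x => g x) '' (W : Set V) ≠ Set.univ :=
    fun W hW g => W.image_ne_univ_of_finrank_pos (hW ▸ hk) _
  obtain ⟨-, g₀, hg₀, W₀, hW₀, -, hS⟩ := hA
  rcases Ak_eq_univ_or_eq_image hAut hg₀ hW₀ hS with huniv | himage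
  · refine Or.inr (Or.inr ⟨huniv ▸ Set.univ_nonempty.ne_empty, ?_, huniv⟩)
    rintro ⟨W, hW, g, -, himage⟩
    exact not_univ_of_image W hW g (himage ▸ huniv)
  · refine Or.inr (Or.inl ⟨himage ▸ (Set.Nonempty.image _ ⟨0, W₀.zero_mem⟩).ne_empty,
      ⟨W₀, hW₀, g₀⁻¹, G.inv_mem hg₀, himage⟩, himage ▸ not_univ_of_image W₀ hW₀ _⟩)

/-- For `S ⊆ V` with `0 ∉ S` and `k ≥ 1`, exactly one of the following holds:
`A_k(S)` is empty, `A_k(S)` is the image of a `k`-dimensional subspace under an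
element of `G`, or `A_k(S) = V`. -/
theorem stmt_6 (p : ℕ) [Fact p.Prime] (hp : p ≠ 2)
    (V : Type*) [AddCommGroup V] [Module (ZMod p) V] [Countable V] [Infinite V]
    (G : Subgroup (Equiv.Perm V))
    (hclosed : ∀ f : Equiv.Perm V, (∀ F : Finset V, ∃ g ∈ G, ∀ x ∈ F, g x = f x) → f ∈ G)
    (hAut : ∀ φ : V ≃ₗ[ZMod p] V, (φ.toEquiv : Equiv.Perm V) ∈ G)
    (hzero : ∀ g ∈ G, g 0 = (0 : V))
    (S : Set V) (hS : (0 : V) ∉ S) (k : ℕ) (hk : 1 ≤ k) :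
    (Ak p V G k S = ∅ ∧
      ¬ (∃ W : Submodule (ZMod p) V, Module.finrank (ZMod p) W = k ∧
          ∃ g ∈ G, Ak p V G k S = (fun x => g x) '' (W : Set V)) ∧
      Ak p V G k S ≠ Set.univ) ∨
    (Ak p V G k S ≠ ∅ ∧
      (∃ W : Submodule (ZMod p) V, Module.finrank (ZMod p) W = k ∧
          ∃ g ∈ G, Ak p V G k S = (fun x => g x) '' (W : Set V)) ∧
      Ak p V G k S ≠ Set.univ) ∨
    (Ak p V G k S ≠ ∅ ∧
      ¬ (∃ W : Submodule (ZMod p) V, Module.finrank (ZMod p) W = k ∧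
          ∃ g ∈ G, Ak p V G k S = (fun x => g x) '' (W : Set V)) ∧
      Ak p V G k S = Set.univ) :=
  stmt_6_general p V G hAut S k hk
end

section
/- Let S ⊆ V be a linearly independent set and k ≥ 1, and suppose A_k(S) is nontrivial, i.e., A_k(S) ≠ ∅ and A_k(S) ≠ V. Then for every nonzero v ∈ A_k(S) and every unit λ ∈ (ZMod p)ˣ: λ • v ∈ A_k(S) if and only if λ ∈ Γ. -/
open Module Submodule Set Function

section LinearAlgebra

variable {K V : Type*} [Field K] [AddCommGroup V] [Module K V]

theorem Submodule.finite_coe [Finite K] (P : Submodule K V) [FiniteDimensional K P] :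
    (P : Set V).Finite :=
  have := Module.finite_of_finite K (M := P)
  Set.toFinite _

theorem Submodule.mkQ_mem_span_range_iff (U : Submodule K V) {ι : Type*} (c : ι → V) (x : V) :
    U.mkQ x ∈ span K (range (U.mkQ ∘ c)) ↔ x ∈ U ⊔ span K (range c) := by
  rw [range_comp, ← map_span, ← mem_comap, comap_map_mkQ]

theorem LinearIndependent.mkQ_option {U : Submodule K V} {ι : Type*} {c : ι → V}
    (hc : LinearIndependent K (U.mkQ ∘ c)) {x : V} (hx : x ∉ U ⊔ span K (range c)) :
    LinearIndependent K (U.mkQ ∘ fun o => Option.casesOn' o x c) := by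
  have : (U.mkQ ∘ fun o => Option.casesOn' o x c) =
      fun o => Option.casesOn' o (U.mkQ x) (U.mkQ ∘ c) := by
    funext o; cases o <;> rfl
  rw [this, linearIndependent_option']
  exact ⟨hc, (U.mkQ_mem_span_range_iff c x).not.mpr hx⟩

theorem exists_mem_notMem_span_diff_singleton {S : Set V} (hS : LinearIndepOn K id S)
    {v : V} (hv : v ∈ span K S) (hv0 : v ≠ 0) : ∃ s₀ ∈ S, v ∉ span K (S \ {s₀}) := by
  rw [← image_id S, Finsupp.mem_span_image_iff_linearCombination] at hv
  obtain ⟨l, hlS, rfl⟩ := hv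
  obtain ⟨s₀, hs₀⟩ : l.support.Nonempty :=
    Finsupp.support_nonempty_iff.mpr (by rintro rfl; simp at hv0)
  refine ⟨s₀, hlS hs₀, fun h => ?_⟩
  rw [← image_id (S \ {s₀}), Finsupp.mem_span_image_iff_linearCombination] at h
  obtain ⟨l', hl'S, hl'⟩ := h
  have hl'l : l' = l :=
    linearIndepOn_iffₛ.mp hS l' (Finsupp.supported_mono sdiff_subset hl'S) l hlS hl'
  exact Finsupp.mem_support_iff.mp hs₀
    (hl'l ▸ Finsupp.notMem_support_iff.mp fun h => (hl'S h).2 rfl)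

theorem finrank_inf_add_card_le_of_linearIndependent_mkQ {U W : Submodule K V}
    [FiniteDimensional K W] {ι : Type*} [Fintype ι] {c : ι → V} (hcW : ∀ i, c i ∈ W)
    (hc : LinearIndependent K (U.mkQ ∘ c)) :
    finrank K ↥(W ⊓ U) + Fintype.card ι ≤ finrank K W := by
  let b := Module.finBasis K ↥(W ⊓ U)
  have hb : LinearIndependent K fun i => (⟨b i, (b i).2.2⟩ : U) :=
    LinearIndependent.of_comp U.subtype
      (b.linearIndependent.map' (W ⊓ U).subtype (W ⊓ U).ker_subtype :)
  have hF := hb.sumElim_of_quotient c hc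
  have hle : span K (range (Sum.elim (fun i => (b i : V)) c)) ≤ W := by
    rw [span_le]
    rintro _ ⟨i | i, rfl⟩
    exacts [(b i).2.1, hcW i]
  calc finrank K ↥(W ⊓ U) + Fintype.card ι
      = finrank K (span K (range (Sum.elim (fun i => (b i : V)) c))) := by
        rw [finrank_span_eq_card hF]; simp
    _ ≤ finrank K W := Submodule.finrank_mono hle

theorem span_singleton_eq_of_finrank_le_one {P : Submodule K V} [FiniteDimensional K P]
    (hP : finrank K P ≤ 1) {x : V} (hx : x ∈ P) (hx0 : x ≠ 0) : K ∙ x = P :=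
  eq_of_le_of_finrank_le ((span_singleton_le_iff_mem _ _).mpr hx)
    (by rwa [finrank_span_singleton hx0])

theorem exists_linearIndependent_mkQ_comp [Finite K] [Infinite V] {f : V → V} (hf : Injective f)
    (U₁ U₂ : Submodule K V) [FiniteDimensional K U₁] [FiniteDimensional K U₂]
    (ι : Type*) [Finite ι] :
    ∃ c : ι → V, LinearIndependent K (U₁.mkQ ∘ f ∘ c) ∧ LinearIndependent K (U₂.mkQ ∘ c) := by
  induction ι using Finite.induction_empty_option with
  | of_equiv e h =>
    obtain ⟨c, h₁, h₂⟩ := h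
    exact ⟨c ∘ e.symm, h₁.comp _ e.symm.injective, h₂.comp _ e.symm.injective⟩
  | h_empty => exact ⟨PEmpty.elim, linearIndependent_empty_type, linearIndependent_empty_type⟩
  | h_option h =>
    obtain ⟨c, h₁, h₂⟩ := h
    have hfin : ∀ {ι : Type _} [Finite ι] (d : ι → V) (U : Submodule K V)
        [FiniteDimensional K U], ((U ⊔ span K (range d) : Submodule K V) : Set V).Finite :=
      fun d U =>
        have := FiniteDimensional.span_of_finite K (finite_range d)
        Submodule.finite_coe _
    obtain ⟨x, hx⟩ := (((hfin (f ∘ c) U₁).preimage hf.injOn).union (hfin c U₂)).exists_notMem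
    rw [mem_union, not_or] at hx
    refine ⟨fun o => Option.casesOn' o x c, ?_, h₂.mkQ_option hx.2⟩
    have : (f ∘ fun o => Option.casesOn' o x c) = fun o => Option.casesOn' o (f x) (f ∘ c) := by
      funext o; cases o <;> rfl
    rw [this]
    exact h₁.mkQ_option hx.1

theorem Module.Basis.sumExtend_inl {ι : Type*} {c : ι → V} (hc : LinearIndependent K c) (i : ι) :
    Module.Basis.sumExtend hc (Sum.inl i) = c i := by
  unfold Module.Basis.sumExtend
  rw [Module.Basis.reindex_apply]
  simp only [Trans.trans, Module.Basis.extend_apply_self]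
  rfl

theorem exists_linearEquiv_apply_eq [Finite K] [Countable V] [Infinite V] {ι : Type*} [Finite ι]
    {c d : ι → V} (hc : LinearIndependent K c) (hd : LinearIndependent K d) :
    ∃ φ : V ≃ₗ[K] V, ∀ i, φ (c i) = d i := by
  have hinf : ∀ {e : ι → V} (he : LinearIndependent K e),
      Infinite (Module.Basis.sumExtendIndex he) := fun he => by
    by_contra hfin
    rw [not_infinite_iff_finite] at hfin
    have := Module.Finite.of_basis (Module.Basis.sumExtend he)
    have : Finite V := Module.finite_of_finite K
    exact not_finite V
  have := hinf hc
  have := hinf hd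
  obtain ⟨e⟩ : Nonempty (Module.Basis.sumExtendIndex hc ≃ Module.Basis.sumExtendIndex hd) :=
    nonempty_equiv_of_countable
  refine ⟨(Module.Basis.sumExtend hc).equiv (Module.Basis.sumExtend hd)
    (Equiv.sumCongr (Equiv.refl ι) e), fun i => ?_⟩
  rw [← Module.Basis.sumExtend_inl hc, Module.Basis.equiv_apply, Equiv.sumCongr_apply,
    Sum.map_inl, Equiv.refl_apply, Module.Basis.sumExtend_inl]

theorem exists_linearEquiv_eqOn_apply_eq [Finite K] [Countable V] [Infinite V]
    (U : Submodule K V) [FiniteDimensional K U] {x y : V} (hx : x ∉ U) (hy : y ∉ U) :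
    ∃ φ : V ≃ₗ[K] V, (∀ u ∈ U, φ u = u) ∧ φ x = y := by
  let b := Module.finBasis K U
  have hb : LinearIndependent K (U.subtype ∘ b) := b.linearIndependent.map' _ U.ker_subtype
  have hspan : span K (range (U.subtype ∘ b)) = U := by
    rw [range_comp, ← map_span, b.span_eq, Submodule.map_top, range_subtype]
  have hli : ∀ {z}, z ∉ U → LinearIndependent K fun o => Option.casesOn' o z (U.subtype ∘ b) :=
    fun hz => linearIndependent_option'.mpr ⟨hb, by rwa [hspan]⟩
  obtain ⟨φ, hφ⟩ := exists_linearEquiv_apply_eq (hli hx) (hli hy)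
  have hfix : Set.EqOn (φ : V →ₗ[K] V) LinearMap.id (span K (range (U.subtype ∘ b))) :=
    LinearMap.eqOn_span' (by rintro _ ⟨i, rfl⟩; exact hφ (some i))
  exact ⟨φ, fun u hu => hfix (by rwa [SetLike.mem_coe, hspan]), hφ none⟩

theorem exists_linearEquiv_apply_eq_self_finrank_inf_le_one [Finite K] [Countable V] [Infinite V]
    {S : Set V} (hS : LinearIndepOn K id S) (hSfin : S.Finite) {v : V} (hv : v ∈ span K S)
    (hv0 : v ≠ 0) {f : V → V} (hf : Injective f) (U : Submodule K V) [FiniteDimensional K U] :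
    ∃ φ : V ≃ₗ[K] V, φ v = v ∧ finrank K ↥(span K (f '' (φ '' S)) ⊓ U) ≤ 1 := by
  obtain ⟨s₀, hs₀, hvT⟩ := exists_mem_notMem_span_diff_singleton hS hv hv0
  set T := S \ {s₀}
  have : Fintype T := (hSfin.subset sdiff_subset).fintype
  obtain ⟨c, hcU, hcv⟩ := exists_linearIndependent_mkQ_comp hf U (K ∙ v) T
  have hsrc : LinearIndependent K fun o => Option.casesOn' o v ((↑) : T → V) :=
    linearIndependent_option'.mpr ⟨hS.mono sdiff_subset, by rwa [Subtype.range_coe]⟩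
  have hvc : v ∉ span K (range c) := fun h => hv0 <|
    disjoint_def.mp (range_ker_disjoint hcv) v h (by rw [ker_mkQ]; exact mem_span_singleton_self v)
  have htgt : LinearIndependent K fun o => Option.casesOn' o v c :=
    linearIndependent_option'.mpr ⟨hcv.of_comp _, hvc⟩
  obtain ⟨φ, hφ⟩ := exists_linearEquiv_apply_eq hsrc htgt
  refine ⟨φ, hφ none, ?_⟩
  set A := f '' (φ '' S)
  have hAfin : A.Finite := (hSfin.image _).image _
  have := hAfin.fintype
  have := FiniteDimensional.span_of_finite K hAfin
  have hcA : ∀ t : T, f (c t) ∈ span K A := fun t =>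
    subset_span ⟨φ t, ⟨t, t.2.1, rfl⟩, congrArg f (hφ (some t))⟩
  have hdim := finrank_inf_add_card_le_of_linearIndependent_mkQ hcA hcU
  have hA : finrank K (span K A) ≤ S.ncard := calc
    finrank K (span K A) ≤ A.ncard :=
        (finrank_span_le_card A).trans_eq (ncard_eq_toFinset_card' A).symm
    _ ≤ (φ '' S).ncard := ncard_image_le (hSfin.image _)
    _ ≤ S.ncard := ncard_image_le hSfin
  have hT : Fintype.card T + 1 = S.ncard := by
    rw [← Nat.card_eq_fintype_card, Nat.card_coe_set_eq, ncard_sdiff_singleton_add_one hs₀ hSfin]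
  omega

end LinearAlgebra

section SpanClosure

variable (K : Type*) {V : Type*} [Field K] [AddCommGroup V] [Module K V]

def spanClosure (G : Subgroup (Equiv.Perm V)) (S : Set V) : Set V :=
  {v | ∀ g ∈ G, g v ∈ span K (g '' S)}

variable {K} [Finite K] [Countable V] [Infinite V] {G : Subgroup (Equiv.Perm V)} {S : Set V}

theorem exists_mem_fixingSubgroup_apply_notMem_span
    (hAut : ∀ φ : V ≃ₗ[K] V, (φ.toEquiv : Equiv.Perm V) ∈ G) (hSfin : S.Finite) {z : V}
    (hz : z ∉ spanClosure K G S) :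
    ∃ h ∈ G ⊓ fixingSubgroup (Equiv.Perm V) S, h z ∉ span K S := by
  simp only [spanClosure, mem_ofPred_eq, not_forall] at hz
  obtain ⟨h₀, hh₀, hz⟩ := hz
  have := FiniteDimensional.span_of_finite K (hSfin.image h₀)
  have := FiniteDimensional.span_of_finite K hSfin
  obtain ⟨τ, hτ⟩ :=
    ((span K (h₀ '' S)).finite_coe.union ((span K S).finite_coe.image h₀)).exists_notMem
  rw [mem_union, not_or] at hτ
  obtain ⟨φ, hφfix, hφz⟩ := exists_linearEquiv_eqOn_apply_eq _ hz hτ.1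
  refine ⟨h₀⁻¹ * φ.toEquiv * h₀,
    Subgroup.mem_inf.mpr ⟨mul_mem (mul_mem (inv_mem hh₀) (hAut φ)) hh₀, ?_⟩, ?_⟩
  · refine (mem_fixingSubgroup_iff _).mpr fun s hs => ?_
    simp [Equiv.Perm.smul_def, hφfix _ (subset_span (mem_image_of_mem h₀ hs))]
  · refine fun hmem => hτ.2 ⟨_, hmem, ?_⟩
    simp [hφz]

theorem exists_mem_fixingSubgroup_apply_eq
    (hAut : ∀ φ : V ≃ₗ[K] V, (φ.toEquiv : Equiv.Perm V) ∈ G) (hSfin : S.Finite) {x y : V}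
    (hx : x ∉ spanClosure K G S) (hy : y ∉ spanClosure K G S) :
    ∃ ψ ∈ G ⊓ fixingSubgroup (Equiv.Perm V) S, ψ x = y := by
  obtain ⟨hx', hhx, hx⟩ := exists_mem_fixingSubgroup_apply_notMem_span hAut hSfin hx
  obtain ⟨hy', hhy, hy⟩ := exists_mem_fixingSubgroup_apply_notMem_span hAut hSfin hy
  have := FiniteDimensional.span_of_finite K hSfin
  obtain ⟨φ, hφfix, hφ⟩ := exists_linearEquiv_eqOn_apply_eq _ hx hy
  have hφS : φ.toEquiv ∈ G ⊓ fixingSubgroup (Equiv.Perm V) S :=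
    Subgroup.mem_inf.mpr
      ⟨hAut φ, (mem_fixingSubgroup_iff _).mpr fun s hs => hφfix s (subset_span hs)⟩
  refine ⟨hy'⁻¹ * φ.toEquiv * hx', mul_mem (mul_mem (inv_mem hhy) hφS) hhx, ?_⟩
  simp [hφ]

theorem span_singleton_apply_smul_eq
    (hAut : ∀ φ : V ≃ₗ[K] V, (φ.toEquiv : Equiv.Perm V) ∈ G) (hzero : ∀ g ∈ G, g 0 = 0)
    (hS : LinearIndepOn K id S) (hSfin : S.Finite) {v : V} (hv0 : v ≠ 0) {a : K} (ha : a ≠ 0)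
    (hv : v ∈ spanClosure K G S) (hav : a • v ∈ spanClosure K G S) {g : Equiv.Perm V}
    (hg : g ∈ G) : K ∙ g (a • v) = K ∙ g v := by
  have hvS : v ∈ span K S := by simpa using hv 1 (one_mem G)
  have := FiniteDimensional.span_of_finite K (hSfin.image g)
  obtain ⟨φ, hφv, hdim⟩ := exists_linearEquiv_apply_eq_self_finrank_inf_le_one hS hSfin hvS hv0
    g.injective (span K (g '' S))
  have hmem : ∀ w ∈ spanClosure K G S, φ w = w →
      g w ∈ span K (g '' (φ '' S)) ⊓ span K (g '' S) := fun w hw hφw =>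
    ⟨by simpa [Equiv.Perm.coe_mul, image_comp, hφw] using hw _ (mul_mem hg (hAut φ)), hw g hg⟩
  have hne : ∀ w, w ≠ 0 → g w ≠ 0 := fun w hw h => hw (g.injective (h.trans (hzero g hg).symm))
  rw [span_singleton_eq_of_finrank_le_one hdim (hmem _ hav (by rw [map_smul, hφv]))
      (hne _ (smul_ne_zero ha hv0)),
    span_singleton_eq_of_finrank_le_one hdim (hmem v hv hφv) (hne v hv0)]

end SpanClosure

section Ak

variable {p : ℕ} {V : Type*} [AddCommGroup V] [Module (ZMod p) V] {G : Subgroup (Equiv.Perm V)}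
  {k : ℕ} {S : Set V}

theorem apply_mem_Ak {h : Equiv.Perm V} (hh : h ∈ G ⊓ fixingSubgroup (Equiv.Perm V) S) {z : V}
    (hz : z ∈ Ak p V G k S) : h z ∈ Ak p V G k S := by
  obtain ⟨g, hg, W, hWk, hgz, hgS⟩ := hz
  obtain ⟨hhG, hhS⟩ := Subgroup.mem_inf.mp (inv_mem hh)
  refine ⟨g * h⁻¹, mul_mem hg hhG, W, hWk, by simpa using hgz, fun s hs => ?_⟩
  have hhs : h⁻¹ s = s := (mem_fixingSubgroup_iff _).mp hhS s hs
  rw [Equiv.Perm.mul_apply, hhs]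
  exact hgS s hs

variable [Fact p.Prime]

theorem mem_Ak_of_mem_spanClosure {u x : V} (hu : u ∈ Ak p V G k S)
    (hx : x ∈ spanClosure (ZMod p) G S) : x ∈ Ak p V G k S := by
  obtain ⟨g, hg, W, hWk, -, hgS⟩ := hu
  exact ⟨g, hg, W, hWk, span_le.mpr (by rintro _ ⟨s, hs, rfl⟩; exact hgS s hs) (hx g hg), hgS⟩

theorem finite_of_mem_Ak (hk : 1 ≤ k) {v : V} (hv : v ∈ Ak p V G k S) : S.Finite := by
  obtain ⟨g, -, W, hWk, -, hgS⟩ := hv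
  have : FiniteDimensional (ZMod p) W := Module.finite_of_finrank_pos (by omega)
  exact (W.finite_coe.preimage g.injective.injOn).subset hgS

theorem Ak_subset_spanClosure [Countable V] [Infinite V]
    (hAut : ∀ φ : V ≃ₗ[ZMod p] V, (φ.toEquiv : Equiv.Perm V) ∈ G) (hSfin : S.Finite)
    (hnuniv : Ak p V G k S ≠ univ) : Ak p V G k S ⊆ spanClosure (ZMod p) G S := by
  intro u hu
  by_contra hu'
  refine hnuniv (eq_univ_of_forall fun x => ?_)
  by_cases hx : x ∈ spanClosure (ZMod p) G S
  · exact mem_Ak_of_mem_spanClosure hu hx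
  · obtain ⟨ψ, hψ, rfl⟩ := exists_mem_fixingSubgroup_apply_eq hAut hSfin hu' hx
    exact apply_mem_Ak hψ hu

end Ak

theorem stmt_8_general (p : ℕ) [Fact p.Prime]
    (V : Type*) [AddCommGroup V] [Module (ZMod p) V] [Countable V] [Infinite V]
    (G : Subgroup (Equiv.Perm V))
    (hAut : ∀ φ : V ≃ₗ[ZMod p] V, (φ.toEquiv : Equiv.Perm V) ∈ G)
    (hzero : ∀ g ∈ G, g 0 = (0 : V))
    (Γ : Subgroup (ZMod p)ˣ)
    (hΓ : ∀ v w : V,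
      (∀ g ∈ G, Submodule.span (ZMod p) {g v} = Submodule.span (ZMod p) {g w}) ↔
      (∃ γ ∈ Γ, v = (γ : ZMod p) • w))
    (S : Set V) (hS : LinearIndependent (ZMod p) ((↑) : S → V))
    (k : ℕ) (hk : 1 ≤ k)
    (hnuniv : Ak p V G k S ≠ Set.univ)
    (v : V) (hv : v ≠ 0) (hvA : v ∈ Ak p V G k S) (lam : (ZMod p)ˣ) :
    (lam : ZMod p) • v ∈ Ak p V G k S ↔ lam ∈ Γ := by
  constructor
  · intro hlvA
    have hSfin := finite_of_mem_Ak hk hvA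
    have hcl := Ak_subset_spanClosure hAut hSfin hnuniv
    obtain ⟨γ, hγ, hlγ⟩ := (hΓ _ v).mp fun g hg =>
      span_singleton_apply_smul_eq hAut hzero hS hSfin hv lam.ne_zero (hcl hvA) (hcl hlvA) hg
    rwa [Units.ext (smul_left_injective (ZMod p) hv hlγ)]
  · intro hlam
    obtain ⟨g, hg, W, hWk, hgv, hgS⟩ := hvA
    refine ⟨g, hg, W, hWk, ?_, hgS⟩
    rw [← span_singleton_le_iff_mem, (hΓ _ v).mpr ⟨lam, hlam, rfl⟩ g hg]
    exact (span_singleton_le_iff_mem _ _).mpr hgv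

/-- If `S` is linearly independent and `A_k(S)` is nontrivial, then for every
nonzero `v ∈ A_k(S)` and every unit `λ`: `λ • v ∈ A_k(S)` iff `λ ∈ Γ`. -/
theorem stmt_8 (p : ℕ) [Fact p.Prime] (hp : p ≠ 2)
    (V : Type*) [AddCommGroup V] [Module (ZMod p) V] [Countable V] [Infinite V]
    (G : Subgroup (Equiv.Perm V))
    (hclosed : ∀ f : Equiv.Perm V, (∀ F : Finset V, ∃ g ∈ G, ∀ x ∈ F, g x = f x) → f ∈ G)
    (hAut : ∀ φ : V ≃ₗ[ZMod p] V, (φ.toEquiv : Equiv.Perm V) ∈ G)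
    (hzero : ∀ g ∈ G, g 0 = (0 : V))
    (Γ : Subgroup (ZMod p)ˣ)
    (hΓ : ∀ v w : V,
      (∀ g ∈ G, Submodule.span (ZMod p) {g v} = Submodule.span (ZMod p) {g w}) ↔
      (∃ γ ∈ Γ, v = (γ : ZMod p) • w))
    (S : Set V) (hS : LinearIndependent (ZMod p) ((↑) : S → V))
    (k : ℕ) (hk : 1 ≤ k)
    (hne : Ak p V G k S ≠ ∅) (hnuniv : Ak p V G k S ≠ Set.univ)
    (v : V) (hv : v ≠ 0) (hvA : v ∈ Ak p V G k S) (lam : (ZMod p)ˣ) :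
    (lam : ZMod p) • v ∈ Ak p V G k S ↔ lam ∈ Γ :=
  stmt_8_general p V G hAut hzero Γ hΓ S hS k hk hnuniv v hv hvA lam
end

section
/- Let S be a countable type, let M be a closed subgroup of Equiv.Perm S, and let r be a Setoid (equivalence relation) on S that is M-invariant (for all g ∈ M and a, b ∈ S, a ≈ b implies g a ≈ g b) and all of whose equivalence classes are finite. Then the induced action of M on the quotient Q = Quotient r is closed: for every permutation F of Q such that for each finite subset T of Q there is g ∈ M with ⟦g a⟧ = F ⟦a⟧ for all a ∈ S with ⟦a⟧ ∈ T, there exists g ∈ M with ⟦g a⟧ = F ⟦a⟧ for every a ∈ S. -/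
/-!
Each `a : S` has to be sent into the set of `b` with `⟦b⟧ = F ⟦a⟧`, which is finite because the
classes of `r` are. The product of these finite discrete sets is compact (Tychonoff), and the
closed sets of functions agreeing on a finite `A ⊆ S` with some `g ∈ M` have the finite
intersection property by `happrox`. A common point `f` is injective because every `g` is, and
surjective because `M` preserves `r`: for `b`, pick `c` with `F ⟦c⟧ = ⟦b⟧` and `g` agreeing
with `f` on the class of `c`; then `g⁻¹ b` lies in that class and `f (g⁻¹ b) = b`. Being a
pointwise limit of elements of `M`, the permutation `f` lies in `M`.
-/

open Set Function

theorem exists_mem_pi_eqOn_of_forall_finset {α β : Type*} {C : α → Set β}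
    (hC : ∀ a, (C a).Finite) {Φ : Set (α → β)}
    (hΦ : ∀ A : Finset α, (Φ ∩ (A : Set α).pi C).Nonempty) :
    ∃ f ∈ univ.pi C, ∀ A : Finset α, ∃ φ ∈ Φ, EqOn φ f A := by
  classical
  let _ : TopologicalSpace β := ⊥
  have _ : DiscreteTopology β := ⟨rfl⟩
  let t : Finset α → Set (α → β) := fun A => A.restrict ⁻¹' (A.restrict '' Φ)
  have mem_t {f A} : f ∈ t A ↔ ∃ φ ∈ Φ, EqOn φ f A := by
    simp [t, funext_iff, EqOn]
  have hC_ne (a : α) : (C a).Nonempty :=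
    let ⟨φ, _, hφ⟩ := hΦ {a}
    ⟨φ a, hφ a (by simp)⟩
  have finite_inter (u : Finset (Finset α)) : (univ.pi C ∩ ⋂ A ∈ u, t A).Nonempty := by
    obtain ⟨φ, hφΦ, hφC⟩ := hΦ (u.sup id)
    refine ⟨(u.sup id).piecewise φ fun a => (hC_ne a).some, fun a _ => ?_,
      mem_iInter₂.2 fun A hA => mem_t.2 ⟨φ, hφΦ, fun a ha => ?_⟩⟩
    · by_cases ha : a ∈ u.sup id
      · simpa [ha] using hφC a ha
      · simpa [ha] using (hC_ne a).some_mem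
    · simp [Finset.le_sup (f := id) hA ha]
  obtain ⟨f, hfC, hft⟩ := (isCompact_univ_pi fun a => (hC a).isCompact).inter_iInter_nonempty
    t (fun A => (isClosed_discrete _).preimage (Finset.continuous_restrict A)) finite_inter
  exact ⟨f, hfC, fun A => mem_t.1 (mem_iInter.1 hft A)⟩

theorem Setoid.finite_setOf_mk_eq {S : Type*} {r : Setoid S}
    (hfin : ∀ a : S, {b : S | r.r a b}.Finite) (q : Quotient r) :
    {b : S | Quotient.mk r b = q}.Finite :=
  (hfin q.out).subset fun _ hb =>
    r.symm (Quotient.exact (hb.trans (Quotient.out_eq q).symm))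

section PointwiseLimit

variable {S : Type*} {M : Subgroup (Equiv.Perm S)} {f : S → S}

theorem injective_of_forall_finset_exists_eqOn (hf : ∀ A : Finset S, ∃ g ∈ M, EqOn g f A) :
    Injective f := by
  classical
  intro a b hab
  obtain ⟨g, -, hg⟩ := hf {a, b}
  exact g.injective (by rw [hg (by simp), hg (by simp), hab])

theorem surjective_of_forall_finset_exists_eqOn {r : Setoid S}
    (hinv : ∀ g ∈ M, ∀ a b : S, r.r a b → r.r (g a) (g b))
    (hfin : ∀ a : S, {b : S | r.r a b}.Finite)
    {F : Equiv.Perm (Quotient r)} (hfF : ∀ a, Quotient.mk r (f a) = F (Quotient.mk r a))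
    (hf : ∀ A : Finset S, ∃ g ∈ M, EqOn g f A) :
    Surjective f := by
  intro b
  set c := (F.symm (Quotient.mk r b)).out
  let A := (r.finite_setOf_mk_eq hfin (Quotient.mk r c)).toFinset
  obtain ⟨g, hgM, hg⟩ := hf A
  have hgc : r.r (g c) b := by
    refine Quotient.exact ?_
    rw [hg (by simp [A]), hfF, Quotient.out_eq, Equiv.apply_symm_apply]
  have hc : r.r c (g⁻¹ b) := by
    simpa using hinv _ (M.inv_mem hgM) _ _ hgc
  refine ⟨g⁻¹ b, ?_⟩
  rw [← hg (by simpa [A] using (Quotient.sound hc).symm)]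
  simp

end PointwiseLimit

theorem stmt_14_general (S : Type*)
    (M : Subgroup (Equiv.Perm S))
    (hM : ∀ f : Equiv.Perm S, (∀ F : Finset S, ∃ g ∈ M, ∀ x ∈ F, g x = f x) → f ∈ M)
    (r : Setoid S)
    (hinv : ∀ g ∈ M, ∀ a b : S, r.r a b → r.r (g a) (g b))
    (hfin : ∀ a : S, {b : S | r.r a b}.Finite)
    (F : Equiv.Perm (Quotient r))
    (happrox : ∀ T : Finset (Quotient r), ∃ g ∈ M, ∀ a : S,
      Quotient.mk r a ∈ T → Quotient.mk r (g a) = F (Quotient.mk r a)) :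
    ∃ g ∈ M, ∀ a : S, Quotient.mk r (g a) = F (Quotient.mk r a) := by
  classical
  obtain ⟨f, hfC, hf⟩ := exists_mem_pi_eqOn_of_forall_finset
    (C := fun a => {b | Quotient.mk r b = F (Quotient.mk r a)})
    (fun a => r.finite_setOf_mk_eq hfin _) (Φ := (⇑) '' (M : Set (Equiv.Perm S)))
    fun A => by
      obtain ⟨g, hgM, hg⟩ := happrox (A.image (Quotient.mk r))
      exact ⟨g, mem_image_of_mem _ hgM, fun a ha => hg a (Finset.mem_image_of_mem _ ha)⟩
  have hfF (a : S) : Quotient.mk r (f a) = F (Quotient.mk r a) := hfC a (mem_univ a)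
  simp only [exists_mem_image, SetLike.mem_coe] at hf
  have hbij : Bijective f := ⟨injective_of_forall_finset_exists_eqOn hf,
    surjective_of_forall_finset_exists_eqOn hinv hfin hfF hf⟩
  exact ⟨_, hM (Equiv.ofBijective f hbij) hf, hfF⟩

/-- If `M` is a closed subgroup of `Equiv.Perm S` (`S` countable) and `r` is an
`M`-invariant equivalence relation on `S` with finite classes, then the induced
action of `M` on the quotient is closed. -/
theorem stmt_14 (S : Type*) [Countable S]
    (M : Subgroup (Equiv.Perm S))
    (hM : ∀ f : Equiv.Perm S, (∀ F : Finset S, ∃ g ∈ M, ∀ x ∈ F, g x = f x) → f ∈ M)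
    (r : Setoid S)
    (hinv : ∀ g ∈ M, ∀ a b : S, r.r a b → r.r (g a) (g b))
    (hfin : ∀ a : S, {b : S | r.r a b}.Finite)
    (F : Equiv.Perm (Quotient r))
    (happrox : ∀ T : Finset (Quotient r), ∃ g ∈ M, ∀ a : S,
      Quotient.mk r a ∈ T → Quotient.mk r (g a) = F (Quotient.mk r a)) :
    ∃ g ∈ M, ∀ a : S, Quotient.mk r (g a) = F (Quotient.mk r a) :=
  stmt_14_general S M hM r hinv hfin F happrox
end
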